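/- arXiv:1106.3663 — 10 statements merged into one kernel-verified Lean document; each statement's English description precedes it below -/
import Mathlib

section
/- Let R be a local ring, x a non-zerodivisor in the maximal ideal, S = R/(x^n) with n > 1, R̄ = R/(x), and T an S-module of finite projective dimension over S. Then the submodule (0 :_T x) of elements of T annihilated by x is isomorphic to T/xT. -/
open CategoryTheory

/-- `M` has projective dimension at most `n` over `R`, expressed by the standard
characterization: `Ext^{n+1}_R(M, N) = 0` for every `R`-module `N`. -/
def ProjDimLE (R : Type) [CommRing R] (M : Type) [AddCommGroup M] [Module R M] (n : ℕ) : Prop :=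
  ∀ N : ModuleCat R,
    Subsingleton (((Ext R (ModuleCat R) (n + 1)).obj (Opposite.op (ModuleCat.of R M))).obj N)

/-!
Write `a` and `b` for the images of `x` and `x ^ (n - 1)` in `S = R ⧸ (x ^ n)`. Since `x` is a
non-zerodivisor, `(a, b)` is an exact pair of zero divisors: `ann a = (b)` and `ann b = (a)`.
This two-sided exactness of `S --b--> S --a--> S` passes to projective modules, and then from
the syzygies of a projective resolution of `T` down to `T`, starting at the `d`-th syzygy, which
is projective because `Ext^{d+1}(T, -)` vanishes. On `T` it says that multiplication by `b`
maps `T` onto `(0 :_T a)` with kernel `aT`, so `(0 :_T x) ≅ T ⧸ xT`.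
-/

section ExactPair

variable {S : Type*} [CommRing S]

/-- `ker a ⊆ im b` on `M`: exactness of `M --b--> M --a--> M` once `a * b = 0`. -/
def SMulExact (a b : S) (M : Type*) [AddCommGroup M] [Module S M] : Prop :=
  ∀ m : M, a • m = 0 → ∃ m', b • m' = m

variable {a b : S} {M N : Type*} [AddCommGroup M] [Module S M] [AddCommGroup N] [Module S N]

namespace SMulExact

lemma of_retraction (h : SMulExact a b M) (r : M →ₗ[S] N) (i : N →ₗ[S] M)
    (hri : r ∘ₗ i = LinearMap.id) : SMulExact a b N := by
  intro m hm
  obtain ⟨m', hm'⟩ := h (i m) (by rw [← map_smul, hm, map_zero])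
  refine ⟨r m', ?_⟩
  rw [← map_smul, hm', ← LinearMap.comp_apply, hri, LinearMap.id_apply]

lemma finsupp (h : SMulExact a b M) (ι : Type*) : SMulExact a b (ι →₀ M) := by
  intro v hv
  choose t ht using fun i => h (v i) (by simpa using DFunLike.congr_fun hv i)
  refine ⟨v.support.sum fun i => Finsupp.single i (t i), ?_⟩
  conv_rhs => rw [← v.sum_single]
  simp only [Finset.smul_sum, Finsupp.smul_single, ht, Finsupp.sum]

lemma of_projective (h : SMulExact a b S) [Module.Projective S M] : SMulExact a b M := by
  obtain ⟨s, hs⟩ := Module.projective_def'.mp ‹Module.Projective S M›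
  exact (h.finsupp M).of_retraction _ s hs

lemma of_exact {K : Type*} [AddCommGroup K] [Module S K] (hab : a * b = 0)
    {g : K →ₗ[S] M} {f : M →ₗ[S] N} (hg : Function.Injective g) (hf : Function.Surjective f)
    (hgf : Function.Exact g f) (hK : SMulExact b a K) (hM : SMulExact a b M) :
    SMulExact a b N := by
  intro n hn
  obtain ⟨p, rfl⟩ := hf n
  obtain ⟨k, hk⟩ := (hgf (a • p)).mp (by rw [map_smul, hn])
  have hbk : b • k = 0 := hg <| by
    rw [map_smul, hk, smul_smul, mul_comm, hab, zero_smul, map_zero]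
  obtain ⟨k', rfl⟩ := hK k hbk
  obtain ⟨q, hq⟩ := hM (p - g k') (by rw [smul_sub, ← map_smul, hk, sub_self])
  refine ⟨f q, ?_⟩
  rw [← map_smul, hq, map_sub, hgf.apply_apply_eq_zero, sub_zero]

end SMulExact

structure IsExactPairOfZeroDivisors (a b : S) : Prop where
  mul_eq_zero : a * b = 0
  smulExact : SMulExact a b S
  smulExact_swap : SMulExact b a S

lemma IsExactPairOfZeroDivisors.symm (h : IsExactPairOfZeroDivisors a b) :
    IsExactPairOfZeroDivisors b a :=
  ⟨by rw [mul_comm, h.mul_eq_zero], h.smulExact_swap, h.smulExact⟩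

/-- Multiplication by `b` maps `M` onto `ker a`, with kernel `ker b = a • M`. -/
noncomputable def kerLSMulEquivQuotient (hab : a * b = 0) (hab' : SMulExact a b M)
    (hba : SMulExact b a M) :
    LinearMap.ker (LinearMap.lsmul S M a) ≃ₗ[S] M ⧸ (Ideal.span {a} • (⊤ : Submodule S M)) := by
  let Φ : M →ₗ[S] LinearMap.ker (LinearMap.lsmul S M a) :=
    LinearMap.codRestrict _ (LinearMap.lsmul S M b) fun m => by
      rw [LinearMap.mem_ker, LinearMap.lsmul_apply, LinearMap.lsmul_apply, smul_smul, hab,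
        zero_smul]
  have hΦ : Function.Surjective Φ := by
    rintro ⟨m, hm⟩
    obtain ⟨m', rfl⟩ := hab' m hm
    exact ⟨m', rfl⟩
  have hker : LinearMap.ker Φ = Ideal.span {a} • ⊤ := by
    rw [LinearMap.ker_codRestrict, Submodule.ideal_span_singleton_smul]
    apply le_antisymm
    · intro m hm
      obtain ⟨m', rfl⟩ := hba m hm
      exact Submodule.smul_mem_pointwise_smul _ _ _ trivial
    · rintro _ ⟨m, -, rfl⟩
      simp [smul_smul, hab]
  exact ((Submodule.quotEquivOfEq _ _ hker.symm).trans (Φ.quotKerEquivOfSurjective hΦ)).symm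

end ExactPair

section QuotientSpanPow

variable {R : Type*} [CommRing R] {x : R}

lemma smulExact_quotient_span_pow (hx : x ∈ nonZeroDivisors R) {k m n : ℕ} (hkmn : k + m = n) :
    SMulExact (Ideal.Quotient.mk (Ideal.span {x ^ n}) (x ^ k))
      (Ideal.Quotient.mk (Ideal.span {x ^ n}) (x ^ m)) (R ⧸ Ideal.span {x ^ n}) := by
  intro s hs
  obtain ⟨r, rfl⟩ := Ideal.Quotient.mk_surjective s
  rw [smul_eq_mul, ← map_mul, Ideal.Quotient.eq_zero_iff_mem, Ideal.mem_span_singleton'] at hs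
  obtain ⟨c, hc⟩ := hs
  have : x ^ k * (x ^ m * c) = x ^ k * r := by rw [← hc, ← hkmn, pow_add]; ring
  refine ⟨Ideal.Quotient.mk _ c, ?_⟩
  rw [smul_eq_mul, ← map_mul, (mul_cancel_left_mem_nonZeroDivisors (pow_mem hx k)).mp this]

lemma isExactPairOfZeroDivisors_quotient_span_pow (hx : x ∈ nonZeroDivisors R) {k m n : ℕ}
    (hkmn : k + m = n) :
    IsExactPairOfZeroDivisors (Ideal.Quotient.mk (Ideal.span {x ^ n}) (x ^ k))
      (Ideal.Quotient.mk (Ideal.span {x ^ n}) (x ^ m)) where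
  mul_eq_zero := by
    rw [← map_mul, ← pow_add, hkmn, Ideal.Quotient.eq_zero_iff_mem]
    exact Ideal.mem_span_singleton_self _
  smulExact := smulExact_quotient_span_pow hx hkmn
  smulExact_swap := smulExact_quotient_span_pow hx (by rwa [add_comm])

end QuotientSpanPow

namespace CategoryTheory.ProjectiveResolution

variable {S : Type} [CommRing S] {X : ModuleCat S} (P : ProjectiveResolution X)

def syzygy (j : ℕ) : Submodule S (P.complex.X j) :=
  LinearMap.range (P.complex.d (j + 1) j).hom

instance (j : ℕ) : Module.Projective S (P.complex.X j) :=
  (IsProjective.iff_projective _).mpr (P.projective j)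

lemma exact_syzygy_succ (j : ℕ) :
    Function.Exact (P.syzygy (j + 1)).subtype (P.complex.d (j + 1) j).hom.rangeRestrict := by
  rw [LinearMap.exact_iff, LinearMap.ker_rangeRestrict, Submodule.range_subtype]
  exact (P.exact_succ j).moduleCat_range_eq_ker.symm

lemma exact_syzygy_zero : Function.Exact (P.syzygy 0).subtype (P.π.f 0).hom := by
  rw [LinearMap.exact_iff, Submodule.range_subtype]
  exact P.exact₀.moduleCat_range_eq_ker.symm

lemma surjective_π_f_zero : Function.Surjective (P.π.f 0).hom :=
  (ModuleCat.epi_iff_surjective _).mp inferInstance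

/-- The corestriction `φ` of `d : P_{d+1} → P_d` to the `d`-th syzygy is a cocycle of
`Hom(P, syzygy d)`, hence a coboundary `φ = ψ ∘ d`, and `ψ` retracts the syzygy. -/
lemma projective_syzygy (d : ℕ) (h : Subsingleton
    (((Ext S (ModuleCat S) (d + 1)).obj (Opposite.op X)).obj (ModuleCat.of S (P.syzygy d)))) :
    Module.Projective S (P.syzygy d) := by
  let Y := P.complex.linearYonedaObj S (ModuleCat.of S (P.syzygy d))
  have hY : Y.ExactAt (d + 1) := by
    rw [HomologicalComplex.exactAt_iff_isZero_homology]
    have := ((forget (ModuleCat S)).mapIso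
      (P.isoExt (d + 1) (ModuleCat.of S (P.syzygy d)))).toEquiv.symm.subsingleton
    exact ModuleCat.isZero_of_subsingleton _
  rw [HomologicalComplex.exactAt_iff' _ d (d + 1) (d + 2) (by simp) (by simp),
    ShortComplex.moduleCat_exact_iff] at hY
  let φ : P.complex.X (d + 1) ⟶ ModuleCat.of S (P.syzygy d) :=
    ModuleCat.ofHom (P.complex.d (d + 1) d).hom.rangeRestrict
  obtain ⟨ψ, hψ⟩ := hY φ <| by
    show P.complex.d (d + 2) (d + 1) ≫ φ = 0
    ext y
    exact congr($(P.complex.d_comp_d (d + 2) (d + 1) d).hom y)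
  have hψ' : P.complex.d (d + 1) d ≫ ψ = φ := hψ
  refine .of_split (P.syzygy d).subtype ψ.hom ?_
  ext ⟨_, y, rfl⟩
  exact congr($(hψ').hom y)

lemma smulExact_syzygy {a b : S} (h : IsExactPairOfZeroDivisors a b) {d : ℕ}
    (hd : Module.Projective S (P.syzygy d)) {j : ℕ} (hj : j ≤ d) :
    SMulExact a b (P.syzygy j) := by
  induction hj using Nat.decreasingInduction generalizing a b with
  | self => exact SMulExact.of_projective h.smulExact
  | of_succ j _ ih =>
    exact SMulExact.of_exact h.mul_eq_zero Subtype.val_injective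
      (LinearMap.surjective_rangeRestrict _) (P.exact_syzygy_succ j) (ih h.symm)
      (SMulExact.of_projective h.smulExact)

lemma smulExact {a b : S} (h : IsExactPairOfZeroDivisors a b) {d : ℕ}
    (hd : Module.Projective S (P.syzygy d)) : SMulExact a b X :=
  SMulExact.of_exact h.mul_eq_zero Subtype.val_injective P.surjective_π_f_zero
    P.exact_syzygy_zero (P.smulExact_syzygy h.symm hd d.zero_le)
    (SMulExact.of_projective h.smulExact)

end CategoryTheory.ProjectiveResolution

theorem SMulExact.of_projDimLE {S : Type} [CommRing S] {a b : S}
    (h : IsExactPairOfZeroDivisors a b) {T : Type} [AddCommGroup T] [Module S T] {d : ℕ}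
    (hpd : ProjDimLE S T d) : SMulExact a b T := by
  obtain ⟨P⟩ := (inferInstance : HasProjectiveResolution (ModuleCat.of S T)).out
  exact P.smulExact h (P.projective_syzygy d (hpd _))

theorem stmt1_general (R : Type) [CommRing R]
    (x : R) (hx : x ∈ nonZeroDivisors R)
    (n : ℕ) (hn : 1 < n)
    (T : Type) [AddCommGroup T] [Module (R ⧸ Ideal.span {x ^ n}) T]
    (hpd : ∃ d : ℕ, ProjDimLE (R ⧸ Ideal.span {x ^ n}) T d) :
    Nonempty
      ((LinearMap.ker (LinearMap.lsmul (R ⧸ Ideal.span {x ^ n}) T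
          (Ideal.Quotient.mk (Ideal.span {x ^ n}) x)))
        ≃ₗ[R ⧸ Ideal.span {x ^ n}]
       (T ⧸ ((Ideal.span {Ideal.Quotient.mk (Ideal.span {x ^ n}) x}) • (⊤ : Submodule (R ⧸ Ideal.span {x ^ n}) T)))) := by
  obtain ⟨d, hd⟩ := hpd
  have h := isExactPairOfZeroDivisors_quotient_span_pow hx (Nat.add_sub_cancel' hn.le)
  rw [pow_one] at h
  exact ⟨kerLSMulEquivQuotient h.mul_eq_zero (.of_projDimLE h hd) (.of_projDimLE h.symm hd)⟩

/-- Let `R` be a Noetherian local ring, `x` a non-zerodivisor in the maximal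
ideal, `S = R/(xⁿ)` with `n > 1`, and `T` a finitely generated `S`-module of finite projective
dimension over `S`.  Then `(0 :_T x) ≅ T/xT`. -/
theorem stmt1 (R : Type) [CommRing R] [IsNoetherianRing R] [IsLocalRing R]
    (x : R) (hx : x ∈ nonZeroDivisors R) (hxm : x ∈ IsLocalRing.maximalIdeal R)
    (n : ℕ) (hn : 1 < n)
    (T : Type) [AddCommGroup T] [Module (R ⧸ Ideal.span {x ^ n}) T]
    [Module.Finite (R ⧸ Ideal.span {x ^ n}) T]
    (hpd : ∃ d : ℕ, ProjDimLE (R ⧸ Ideal.span {x ^ n}) T d) :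
    Nonempty
      ((LinearMap.ker (LinearMap.lsmul (R ⧸ Ideal.span {x ^ n}) T
          (Ideal.Quotient.mk (Ideal.span {x ^ n}) x)))
        ≃ₗ[R ⧸ Ideal.span {x ^ n}]
       (T ⧸ ((Ideal.span {Ideal.Quotient.mk (Ideal.span {x ^ n}) x}) • (⊤ : Submodule (R ⧸ Ideal.span {x ^ n}) T)))) :=
  stmt1_general R x hx n hn T hpd
end

section
/- Let (R, m) be a Noetherian local ring, M a finitely generated R-module, and x ∈ m a non-zerodivisor on R. If x annihilates the functor Ext_R^{k+1}(M, ·) for a fixed k > 0 (i.e., x·Ext_R^{k+1}(M, N) = 0 for every R-module N), then x annihilates Ext_R^{j+1}(M, ·) for all j ≥ k. -/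
/-! Dimension shifting in the second variable. Embed `N` into an injective `I` with cokernel `Q`
and apply `Hom(P, -)` for a projective resolution `P` of `M`: this gives a short exact sequence of
cochain complexes whose middle term `Hom(P, I)` is acyclic in positive degrees, so the connecting
map `Ext^{n+1}(M, Q) → Ext^{n+2}(M, N)` is a surjective `R`-linear map. Hence if `x` kills
`Ext^{n+1}(M, -)` it kills `Ext^{n+2}(M, -)`, and induction on `j` finishes. -/

open CategoryTheory Limits

lemma Module.IsTorsionBy.of_surjective {R M N : Type*} [Semiring R] [AddCommMonoid M] [Module R M]
    [AddCommMonoid N] [Module R N] {x : R} (hM : IsTorsionBy R M x) (f : M →ₗ[R] N)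
    (hf : Function.Surjective f) : IsTorsionBy R N x := by
  intro n
  obtain ⟨m, rfl⟩ := hf n
  rw [← map_smul, hM, map_zero]

variable {C : Type*} [Category* C] [Abelian C]

namespace ChainComplex

variable {α : Type*} [AddRightCancelSemigroup α] [One α] (P : ChainComplex C α)
  (R : Type*) [Ring R] [Linear R C]

noncomputable def linearYoneda : C ⥤ CochainComplex (ModuleCat R) α where
  obj := P.linearYonedaObj R
  map φ :=
    { f _ := ModuleCat.ofHom (Linear.rightComp R _ φ)
      comm' _ _ _ := by ext; exact (Category.assoc _ _ _).symm }
  map_id _ := by ext; exact Category.comp_id _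
  map_comp _ _ := by ext; exact (Category.assoc _ _ _).symm

instance : (P.linearYoneda R).Additive where
  map_add := by intros; ext; exact Preadditive.comp_add _ _ _ _ _ _

lemma shortExact_map_linearYoneda [∀ i, Projective (P.X i)] {S : ShortComplex C}
    (hS : S.ShortExact) : (S.map (P.linearYoneda R)).ShortExact := by
  have := hS.mono_f
  refine HomologicalComplex.shortExact_of_degreewise_shortExact _ fun i => ?_
  refine { exact := ?_, mono_f := ?_, epi_g := ?_ }
  · rw [ShortComplex.moduleCat_exact_iff]
    intro (g : P.X i ⟶ S.X₂) (hg : g ≫ S.g = 0)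
    exact ⟨hS.exact.lift g hg, hS.exact.lift_f g hg⟩
  · rw [ModuleCat.mono_iff_injective]
    intro (g₁ : P.X i ⟶ S.X₁) g₂ (h : g₁ ≫ S.f = g₂ ≫ S.f)
    exact (cancel_mono S.f).mp h
  · rw [ModuleCat.epi_iff_surjective]
    have := hS.epi_g
    intro (g : P.X i ⟶ S.X₃)
    exact ⟨Projective.factorThru g S.g, Projective.factorThru_comp g S.g⟩

end ChainComplex

lemma CategoryTheory.ProjectiveResolution.isZero_homology_succ_linearYonedaObj {Z : C}
    (P : ProjectiveResolution Z) (R : Type*) [Ring R] [Linear R C] (I : C) [Injective I] (n : ℕ) :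
    IsZero ((P.complex.linearYonedaObj R I).homology (n + 1)) := by
  rw [← HomologicalComplex.exactAt_iff_isZero_homology,
    HomologicalComplex.exactAt_iff' _ n (n + 1) (n + 2) (by simp) (by simp),
    ShortComplex.moduleCat_exact_iff]
  intro (g : P.complex.X (n + 1) ⟶ I) (hg : P.complex.d (n + 2) (n + 1) ≫ g = 0)
  exact ⟨(P.exact_succ n).descToInjective g hg, (P.exact_succ n).comp_descToInjective g hg⟩

lemma CategoryTheory.ShortComplex.ShortExact.isTorsionBy_homology_of_isZero {R : Type*} [Ring R]
    {ι : Type*} {c : ComplexShape ι} {S : ShortComplex (HomologicalComplex (ModuleCat R) c)}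
    (hS : S.ShortExact) {i j : ι} (hij : c.Rel i j) (hZ : IsZero (S.X₂.homology j)) {x : R}
    (hx : Module.IsTorsionBy R (S.X₃.homology i) x) :
    Module.IsTorsionBy R (S.X₁.homology j) x :=
  hx.of_surjective (hS.δ i j hij).hom <| (ModuleCat.epi_iff_surjective _).mp <|
    (hS.homology_exact₁ i j hij).epi_f (hZ.eq_of_tgt _ _)

variable {R : Type*} [Ring R] [Linear R C] [EnoughProjectives C]

lemma CategoryTheory.ProjectiveResolution.isTorsionBy_Ext_iff {X : C} (P : ProjectiveResolution X)
    (n : ℕ) (Y : C) (x : R) :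
    Module.IsTorsionBy R (((Ext R C n).obj (Opposite.op X)).obj Y) x ↔
      Module.IsTorsionBy R ((P.complex.linearYonedaObj R Y).homology n) x :=
  ⟨fun h => h.of_surjective _ (P.isoExt n Y).toLinearEquiv.surjective,
    fun h => h.of_surjective _ (P.isoExt n Y).toLinearEquiv.symm.surjective⟩

lemma isTorsionBy_Ext_succ_succ [EnoughInjectives C] {X : C} {x : R} {n : ℕ}
    (h : ∀ Y : C, Module.IsTorsionBy R (((Ext R C (n + 1)).obj (Opposite.op X)).obj Y) x)
    (Y : C) :
    Module.IsTorsionBy R (((Ext R C (n + 2)).obj (Opposite.op X)).obj Y) x := by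
  let P := projectiveResolution X
  have hS := ShortComplex.ShortExact.mk' (ShortComplex.cokernelSequence_exact (Injective.ι Y))
    (inferInstanceAs (Mono (Injective.ι Y))) inferInstance
  rw [P.isTorsionBy_Ext_iff]
  exact (P.complex.shortExact_map_linearYoneda R hS).isTorsionBy_homology_of_isZero rfl
    (P.isZero_homology_succ_linearYonedaObj R (Injective.under Y) (n + 1))
    ((P.isTorsionBy_Ext_iff (n + 1) _ _).mp (h _))

theorem stmt4_general (R : Type) [CommRing R] (M : Type) [AddCommGroup M] [Module R M] (x : R) (k : ℕ)
    (h : ∀ N : ModuleCat R,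
      ∀ e : ((Ext R (ModuleCat R) (k + 1)).obj (Opposite.op (ModuleCat.of R M))).obj N,
        x • e = 0) :
    ∀ j : ℕ, k ≤ j → ∀ N : ModuleCat R,
      ∀ e : ((Ext R (ModuleCat R) (j + 1)).obj (Opposite.op (ModuleCat.of R M))).obj N,
        x • e = 0 := by
  intro j hj
  induction j, hj using Nat.le_induction with
  | base => exact h
  | succ j _ ih => exact isTorsionBy_Ext_succ_succ ih

/-- Let `(R, m)` be a Noetherian local ring, `M` a finitely generated
`R`-module, and `x ∈ m` a non-zerodivisor on `R`.  If `x` annihilates the functor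
`Ext_R^{k+1}(M, ·)` for a fixed `k > 0`, then `x` annihilates `Ext_R^{j+1}(M, ·)`
for all `j ≥ k`. -/
theorem stmt4 (R : Type) [CommRing R] [IsNoetherianRing R] [IsLocalRing R]
    (M : Type) [AddCommGroup M] [Module R M] [Module.Finite R M]
    (x : R) (hxm : x ∈ IsLocalRing.maximalIdeal R) (hx : x ∈ nonZeroDivisors R)
    (k : ℕ) (hk : 0 < k)
    (h : ∀ N : ModuleCat R,
      ∀ e : ((Ext R (ModuleCat R) (k + 1)).obj (Opposite.op (ModuleCat.of R M))).obj N,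
        x • e = 0) :
    ∀ j : ℕ, k ≤ j → ∀ N : ModuleCat R,
      ∀ e : ((Ext R (ModuleCat R) (j + 1)).obj (Opposite.op (ModuleCat.of R M))).obj N,
        x • e = 0 :=
  stmt4_general R M x k h
end

section
/- Let (R, m) be a Noetherian local ring, Z a finitely generated R-module, and x ∈ m a superficial element for m with respect to Z (i.e., there exists c ∈ ℕ with (m^{j+1}Z :_Z x) ∩ m^c Z = m^j Z for all j ≥ c) such that x is a non-zerodivisor on Z and Z ≠ 0. Suppose n ≥ 1 and x^k Z ⊆ m^{k(n+1)} Z for all k ∈ ℕ. Then this leads to a contradiction; i.e., there exists k with x^k Z ⊄ m^{k(n+1)} Z. -/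
open IsLocalRing

/-- Let `(R, m)` be a Noetherian local ring, `Z ≠ 0` a finitely generated
`R`-module, `x ∈ m` a non-zerodivisor on `Z` which is superficial for `m` with respect to `Z`
(with bound `c`).  If `n ≥ 1` and `xᵏ Z ⊆ m^{k(n+1)} Z` for all `k`, then we reach a
contradiction. -/
theorem stmt8 (R : Type) [CommRing R] [IsNoetherianRing R] [IsLocalRing R]
    (Z : Type) [AddCommGroup Z] [Module R Z] [Module.Finite R Z] [Nontrivial Z]
    (x : R) (hxm : x ∈ maximalIdeal R)
    (hreg : ∀ z : Z, x • z = 0 → z = 0)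
    (c : ℕ)
    (hsup : ∀ j : ℕ, c ≤ j →
      (Submodule.comap (LinearMap.lsmul R Z x)
          ((maximalIdeal R ^ (j + 1) : Ideal R) • (⊤ : Submodule R Z)))
        ⊓ ((maximalIdeal R ^ c : Ideal R) • (⊤ : Submodule R Z))
      = (maximalIdeal R ^ j : Ideal R) • (⊤ : Submodule R Z))
    (n : ℕ) (hn : 1 ≤ n)
    (hcontain : ∀ (k : ℕ) (z : Z),
      (x ^ k) • z ∈ ((maximalIdeal R ^ (k * (n + 1)) : Ideal R) • (⊤ : Submodule R Z))) :
    False := by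
  have hmono : ∀ {a b : ℕ}, a ≤ b →
      ((maximalIdeal R ^ b : Ideal R) • (⊤ : Submodule R Z)) ≤
      ((maximalIdeal R ^ a : Ideal R) • (⊤ : Submodule R Z)) := fun {a b} h =>
    Submodule.smul_mono_left (Ideal.pow_le_pow_right h)
  -- key induction on i
  have key : ∀ i : ℕ, ∀ k : ℕ, c ≤ k → ∀ z : Z,
      (x ^ k) • z ∈ ((maximalIdeal R ^ (k * (n + 1) + i) : Ideal R) • (⊤ : Submodule R Z)) := by
    intro i
    induction i with
    | zero => intro k hk z; simpa using hcontain k z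
    | succ i ih =>
      intro k hk z
      have hj : c ≤ k * (n + 1) + i + 1 := by nlinarith
      rw [show k * (n + 1) + (i + 1) = (k * (n + 1) + i + 1) from by ring]
      rw [← hsup _ hj]
      constructor
      · -- x • (x^k • z) = x^(k+1) • z ∈ m^{(k+1)(n+1)+i} Z ⊆ m^{k(n+1)+i+2} Z
        have h1 := ih (k + 1) (le_trans hk (Nat.le_succ k)) z
        have h2 : (x : R) • ((x ^ k) • z) = (x ^ (k + 1)) • z := by
          rw [smul_smul, ← pow_succ']
        refine Submodule.mem_comap.mpr ?_
        show (x : R) • ((x ^ k) • z) ∈ _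
        rw [h2]
        exact hmono (by nlinarith) h1
      · exact hmono (by nlinarith) (hcontain k z)
  -- conclude x^c • z ∈ ⋂ m^i Z = ⊥
  obtain ⟨z, hz⟩ := exists_ne (0 : Z)
  have hbot : (⨅ i : ℕ, (maximalIdeal R) ^ i • ⊤ : Submodule R Z) = ⊥ :=
    Ideal.iInf_pow_smul_eq_bot_of_isLocalRing (I := maximalIdeal R) (M := Z) ((maximalIdeal.isMaximal R).ne_top)
  have hmem : (x ^ c) • z ∈ (⨅ i : ℕ, (maximalIdeal R) ^ i • ⊤ : Submodule R Z) := by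
    rw [Submodule.mem_iInf]
    intro i
    exact hmono (by nlinarith) (key i c le_rfl z)
  rw [hbot, Submodule.mem_bot] at hmem
  -- x^c • z = 0 implies z = 0 by iterating hreg
  have hzero : ∀ m : ℕ, (x ^ m) • z = 0 → z = 0 := by
    intro m
    induction m with
    | zero => simp
    | succ m ih =>
      intro h
      apply ih
      apply hreg
      rw [smul_smul, ← pow_succ']
      exact h
  exact hz (hzero c hmem)
end

section
/- Let R be a local ring, x a non-zerodivisor not a unit, R̄ = R/(x), and M a finitely generated R̄-module. If M is weakly liftable to R (a direct summand of M̄₀ = M₀/xM₀ for some R-module M₀ on which x is a non-zerodivisor), then the natural extension 0 → M → Syz_1^R(M)/x·Syz_1^R(M) → Syz_1^{R̄}(M) → 0 splits. -/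
/-- `M` is weakly liftable along `x`: it is a direct summand of a module of the form `L/xL`
where `x` is a non-zerodivisor on `L` (Auslander–Ding–Solberg). -/
structure WeakLifting (R : Type) [CommRing R] (x : R)
    (M : Type) [AddCommGroup M] [Module R M] : Type 1 where
  L : Type
  [acg : AddCommGroup L]
  [mod : Module R L]
  reg : ∀ l : L, x • l = 0 → l = 0
  incl : M →ₗ[R] (L ⧸ (Ideal.span {x} • (⊤ : Submodule R L)))
  proj : (L ⧸ (Ideal.span {x} • (⊤ : Submodule R L))) →ₗ[R] M
  split : proj.comp incl = LinearMap.id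

attribute [instance] WeakLifting.acg WeakLifting.mod

/-- Let `R` be a Noetherian local ring, `x` a non-zerodivisor and non-unit,
`R̄ = R/(x)`, and `M` a finitely generated `R̄`-module (i.e. `xM = 0`).  Let
`0 → Z → F → M → 0` be a minimal free presentation of `M` over `R`, so that `Z = Syz₁^R(M)`,
and let `δ : M → Z/xZ` be the natural connecting map (sending `π a ↦ [x • a]`), which is the
left-hand map of the natural extension `0 → M → Syz₁^R(M)/x·Syz₁^R(M) → Syz₁^{R̄}(M) → 0`.
If `M` is weakly liftable to `R`, then this extension splits, i.e. `δ` admits a retraction. -/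
theorem stmt9 (R : Type) [CommRing R] [IsNoetherianRing R] [IsLocalRing R]
    (x : R) (hx : x ∈ nonZeroDivisors R) (hxu : ¬IsUnit x)
    (M : Type) [AddCommGroup M] [Module R M] [Module.Finite R M]
    (hxM : ∀ m : M, x • m = 0)
    (F : Type) [AddCommGroup F] [Module R F] [Module.Free R F] [Module.Finite R F]
    (π : F →ₗ[R] M) (hπ : Function.Surjective π)
    (hmin : LinearMap.ker π ≤ (IsLocalRing.maximalIdeal R) • (⊤ : Submodule R F))
    (δ : M →ₗ[R] ((LinearMap.ker π) ⧸
      (Ideal.span {x} • (⊤ : Submodule R (LinearMap.ker π)))))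
    (hδ : ∀ a : F, δ (π a) = Submodule.Quotient.mk
      (⟨x • a, by rw [LinearMap.mem_ker, map_smul, hxM]⟩ : LinearMap.ker π))
    (hwl : Nonempty (WeakLifting R x M)) :
    ∃ σ : ((LinearMap.ker π) ⧸
        (Ideal.span {x} • (⊤ : Submodule R (LinearMap.ker π)))) →ₗ[R] M,
      σ.comp δ = LinearMap.id := by
  obtain ⟨W⟩ := hwl
  set N : Submodule R W.L := Ideal.span {x} • ⊤ with hN
  obtain ⟨φ, hφ⟩ := Module.projective_lifting_property N.mkQ (W.incl ∘ₗ π)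
    (Submodule.mkQ_surjective N)
  have cancel : ∀ a b : W.L, x • a = x • b → a = b := by
    intro a b h
    have := W.reg (a - b) (by rw [smul_sub, h, sub_self])
    exact sub_eq_zero.mp this
  have hker : ∀ z : LinearMap.ker π, ∃ l : W.L, x • l = φ z := by
    intro z
    have h1 : N.mkQ (φ (z : F)) = 0 := by
      have h := LinearMap.congr_fun hφ (z : F)
      simp only [LinearMap.comp_apply] at h
      rw [h, (LinearMap.mem_ker.mp z.2 : π (z : F) = 0), map_zero]
    have h2 : φ (z : F) ∈ N := by
      rwa [Submodule.mkQ_apply, Submodule.Quotient.mk_eq_zero] at h1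
    rw [hN] at h2
    refine Submodule.smul_induction_on h2 ?_ ?_
    · intro r hr n _
      obtain ⟨c, rfl⟩ := Ideal.mem_span_singleton'.mp hr
      exact ⟨c • n, by rw [smul_comm, ← mul_smul]⟩
    · rintro m₁ m₂ ⟨l₁, hl₁⟩ ⟨l₂, hl₂⟩
      exact ⟨l₁ + l₂, by rw [smul_add, hl₁, hl₂]⟩
  choose ψ0 hψ0 using hker
  have hψx : ∀ (a : F) (ha : x • a ∈ LinearMap.ker π), ψ0 ⟨x • a, ha⟩ = φ a := by
    intro a ha
    refine cancel _ _ ?_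
    rw [hψ0]
    exact map_smul φ x a
  let ψ : LinearMap.ker π →ₗ[R] W.L :=
    { toFun := ψ0
      map_add' := fun z w => cancel _ _ (by
        rw [hψ0, smul_add, hψ0, hψ0, ← map_add]; rfl)
      map_smul' := fun r z => cancel _ _ (by
        show x • ψ0 (r • z) = x • (r • ψ0 z)
        rw [hψ0, smul_comm x r, hψ0]
        show φ (r • (z : F)) = r • φ (z : F)
        rw [map_smul]) }
  let τ : LinearMap.ker π →ₗ[R] M := W.proj ∘ₗ N.mkQ ∘ₗ ψ
  have hτx : ∀ z : LinearMap.ker π, τ (x • z) = 0 := by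
    intro z
    have h1 : ψ (x • z) = φ (z : F) := by
      have : ((x • z : LinearMap.ker π) : F) = x • (z : F) := rfl
      show ψ0 (x • z) = φ (z : F)
      have hz : (x • z : LinearMap.ker π) = ⟨x • (z : F), (x • z).2⟩ := by
        ext; rfl
      rw [hz, hψx]
    show W.proj (N.mkQ (ψ (x • z))) = 0
    rw [h1]
    have h2 : N.mkQ (φ (z : F)) = W.incl (π (z : F)) := LinearMap.congr_fun hφ (z : F)
    rw [h2, (LinearMap.mem_ker.mp z.2 : π (z : F) = 0), map_zero, map_zero]
  have hle : (Ideal.span {x} • (⊤ : Submodule R (LinearMap.ker π))) ≤ LinearMap.ker τ := by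
    refine Submodule.smul_le.mpr ?_
    intro r hr z _
    obtain ⟨c, rfl⟩ := Ideal.mem_span_singleton'.mp hr
    rw [LinearMap.mem_ker, mul_smul, map_smul, hτx, smul_zero]
  refine ⟨Submodule.liftQ _ τ hle, ?_⟩
  apply LinearMap.ext
  intro m
  obtain ⟨a, rfl⟩ := hπ m
  rw [LinearMap.comp_apply, hδ a, LinearMap.id_apply]
  show τ _ = π a
  show W.proj (N.mkQ (ψ0 _)) = π a
  rw [hψx]
  have h2 := LinearMap.congr_fun hφ a
  simp only [LinearMap.comp_apply] at h2
  rw [h2]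
  exact LinearMap.congr_fun W.split (π a)
end

section
/- Let (R, m) be a local ring, x ∈ R, R̄ = R/(x), and M a weakly liftable R̄-module of finite projective dimension over R such that for 2 ≤ k ≤ pd_R M − 1 the sequence 0 → Syz_{k-1}^{R̄}(M) → Syz_k^R(M)/x·Syz_k^R(M) → Syz_k^{R̄}(M) → 0 is split exact. Then the Betti numbers satisfy β_k^R(M) = β_{k-1}^{R̄}(M) + β_k^{R̄}(M) for 2 ≤ k ≤ pd_R M − 1. -/
/-!
Over a local ring `(R, 𝔪)`, measure the minimal number of generators of a module `N` by
`μ_R(N) = ℓ_R(N ⧸ 𝔪N)`. A minimal resolution gives `β_k(M) = μ(Syz_k(M))`, because the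
surjection `F_k → Syz_k(M)` has kernel inside `𝔪F_k`. For `x ∈ 𝔪` we have
`(N ⧸ xN) ⧸ 𝔪(N ⧸ xN) ≅ N ⧸ 𝔪N`, and since `R → R ⧸ (x)` is surjective, lengths and the modules
`N ⧸ 𝔪N` do not change under restriction of scalars; hence `μ_R(N) = μ_{R̄}(N ⧸ xN)`. Applying
`μ_{R̄}` to the splitting `Syz ⧸ x Syz ≅ Syz_{k-1}^{R̄}(M) × Syz_k^{R̄}(M)` gives the formula.
-/

open CategoryTheory IsLocalRing

/-- A minimal free resolution `⋯ → F₁ → F₀ → M → 0` of a module `M`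
over a local ring `R`. -/
structure MinFreeRes (R : Type) [CommRing R] [IsLocalRing R]
    (M : Type) [AddCommGroup M] [Module R M] : Type 1 where
  F : ℕ → ModuleCat R
  d : ∀ n, F (n + 1) ⟶ F n
  aug : F 0 ⟶ ModuleCat.of R M
  free : ∀ n, Module.Free R (F n)
  fin : ∀ n, Module.Finite R (F n)
  aug_surj : Function.Surjective aug
  exact_aug : Function.Exact (d 0) aug
  exact : ∀ n, Function.Exact (d (n + 1)) (d n)
  min_aug : LinearMap.ker aug.hom ≤ (maximalIdeal R) • (⊤ : Submodule R (F 0))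
  min : ∀ n, LinearMap.range (d n).hom ≤ (maximalIdeal R) • (⊤ : Submodule R (F n))

/-- `res.syz k` is the `(k+1)`-st syzygy module of the resolved module: the paper's
`Syz_k(M)` is `res.syz (k-1)` for `k ≥ 1`. -/
def MinFreeRes.syz {R : Type} [CommRing R] [IsLocalRing R]
    {M : Type} [AddCommGroup M] [Module R M] (res : MinFreeRes R M) :
    ∀ k : ℕ, Submodule R (res.F k)
  | 0 => LinearMap.ker res.aug.hom
  | (k + 1) => LinearMap.ker (res.d k).hom

namespace IsLocalRing

open Function

variable (R : Type*) [CommRing R] [IsLocalRing R] (N : Type*) [AddCommGroup N] [Module R N]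

/-- By Nakayama's lemma, for finitely generated `N` this is the minimal number of generators. -/
noncomputable def numGenerators : ℕ∞ :=
  Module.length R (N ⧸ maximalIdeal R • (⊤ : Submodule R N))

variable {R N} {N' : Type*} [AddCommGroup N'] [Module R N']

theorem numGenerators_congr (e : N ≃ₗ[R] N') : numGenerators R N = numGenerators R N' :=
  (Submodule.Quotient.equiv _ _ e
    (by rw [Submodule.map_smul'', Submodule.map_top, LinearEquiv.range])).length_eq

theorem numGenerators_prod :
    numGenerators R (N × N') = numGenerators R N + numGenerators R N' := by
  let e : ((N × N') ⧸ (maximalIdeal R • ⊤ : Submodule R (N × N'))) ≃ₗ[R]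
      ((N ⧸ (maximalIdeal R • ⊤ : Submodule R N)) ×
        (N' ⧸ (maximalIdeal R • ⊤ : Submodule R N'))) :=
    (TensorProduct.quotTensorEquivQuotSMul _ _).symm ≪≫ₗ
      (TensorProduct.prodRight R R (R ⧸ maximalIdeal R) N N') ≪≫ₗ
      (TensorProduct.quotTensorEquivQuotSMul _ _).prodCongr
        (TensorProduct.quotTensorEquivQuotSMul _ _)
  exact e.length_eq.trans (Module.length_prod R _ _)

theorem numGenerators_eq_of_surjective (f : N →ₗ[R] N') (hf : Surjective f)
    (hker : LinearMap.ker f ≤ maximalIdeal R • ⊤) :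
    numGenerators R N = numGenerators R N' := by
  let g := (maximalIdeal R • (⊤ : Submodule R N')).mkQ ∘ₗ f
  have hg : Surjective g := (Submodule.mkQ_surjective _).comp hf
  have hmap : (maximalIdeal R • (⊤ : Submodule R N)).map f = maximalIdeal R • ⊤ := by
    rw [Submodule.map_smul'', Submodule.map_top, LinearMap.range_eq_top.mpr hf]
  have hgker : LinearMap.ker g = maximalIdeal R • ⊤ := by
    rw [LinearMap.ker_comp, Submodule.ker_mkQ, ← hmap, Submodule.comap_map_eq,
      sup_eq_left.mpr hker]
  exact ((Submodule.quotEquivOfEq _ _ hgker.symm) ≪≫ₗ g.quotKerEquivOfSurjective hg).length_eq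

theorem numGenerators_eq_finrank [Module.Free R N] [Module.Finite R N] :
    numGenerators R N = Module.finrank R N := by
  let := Ideal.Quotient.field (maximalIdeal R)
  let e := (TensorProduct.quotTensorEquivQuotSMul N (maximalIdeal R)).extendScalarsOfSurjective
    (Ideal.Quotient.mk_surjective (I := maximalIdeal R))
  rw [numGenerators, Module.length_eq_of_surjective (R := R ⧸ maximalIdeal R)
    (Ideal.Quotient.mk_surjective (I := maximalIdeal R)), ← e.length_eq, Module.length_eq_finrank,
    Module.finrank_baseChange]

theorem numGenerators_quotient_smul_of_le {I : Ideal R} (hI : I ≤ maximalIdeal R) :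
    numGenerators R (N ⧸ I • (⊤ : Submodule R N)) = numGenerators R N := by
  have hmap : (maximalIdeal R • (⊤ : Submodule R N)).map (I • ⊤ : Submodule R N).mkQ
      = maximalIdeal R • ⊤ := by
    rw [Submodule.map_smul'', Submodule.map_top, Submodule.range_mkQ]
  exact ((Submodule.quotEquivOfEq _ _ hmap.symm) ≪≫ₗ
    Submodule.quotientQuotientEquivQuotient _ _ (Submodule.smul_mono_left hI)).length_eq

theorem numGenerators_restrictScalars {S : Type*} [CommRing S] [IsLocalRing S] [Algebra R S]
    (h : Surjective (algebraMap R S)) [Module S N] [IsScalarTower R S N] :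
    numGenerators S N = numGenerators R N := by
  have : IsLocalHom (algebraMap R S) := .of_surjective _ h
  have hmax : (maximalIdeal R).map (algebraMap R S) = maximalIdeal S := by
    rw [← maximalIdeal_comap (algebraMap R S), Ideal.map_comap_of_surjective _ h]
  have hres : (maximalIdeal S • (⊤ : Submodule S N)).restrictScalars R = maximalIdeal R • ⊤ := by
    rw [← hmax, Ideal.smul_restrictScalars, Submodule.restrictScalars_top]
  rw [numGenerators, ← Module.length_eq_of_surjective h,
    ← (Submodule.Quotient.restrictScalarsEquiv R _).length_eq,
    (Submodule.quotEquivOfEq _ _ hres).length_eq, numGenerators]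

end IsLocalRing

namespace MinFreeRes

variable {R : Type} [CommRing R] [IsLocalRing R] {M : Type} [AddCommGroup M] [Module R M]
  (res : MinFreeRes R M)

theorem syz_eq_range (j : ℕ) : res.syz j = LinearMap.range (res.d j).hom := by
  cases j with
  | zero => exact LinearMap.exact_iff.mp res.exact_aug
  | succ j => exact LinearMap.exact_iff.mp (res.exact j)

theorem finrank_eq_numGenerators_syz (j : ℕ) :
    (Module.finrank R (res.F (j + 1)) : ℕ∞) = numGenerators R (res.syz j) := by
  have := res.free (j + 1)
  have := res.fin (j + 1)
  let f := (res.d j).hom.codRestrict (res.syz j) fun v ↦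
    res.syz_eq_range j ▸ LinearMap.mem_range_self _ v
  have hf : Function.Surjective f := by
    rw [← LinearMap.range_eq_top, LinearMap.range_codRestrict, ← res.syz_eq_range,
      Submodule.comap_subtype_self]
  have hker : LinearMap.ker f ≤ maximalIdeal R • ⊤ := by
    rw [LinearMap.ker_codRestrict]
    exact (res.syz_eq_range (j + 1)).le.trans (res.min (j + 1))
  rw [← numGenerators_eq_finrank, numGenerators_eq_of_surjective f hf hker]

end MinFreeRes

theorem stmt10_general (R : Type) [CommRing R] [IsLocalRing R]
    (x : R) (hxu : ¬IsUnit x)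
    [IsLocalRing (R ⧸ Ideal.span {x})]
    (M : Type) [AddCommGroup M] [Module R M]
    [Module (R ⧸ Ideal.span {x}) M]
    (res : MinFreeRes R M) (resb : MinFreeRes (R ⧸ Ideal.span {x}) M)
    (p : ℕ)
    (hsplit : ∀ k : ℕ, 2 ≤ k → k ≤ p - 1 →
      Nonempty
        (((res.syz (k - 1)) ⧸
            ((Ideal.span {x} : Ideal R) • (⊤ : Submodule R (res.syz (k - 1)))))
          ≃ₗ[R ⧸ Ideal.span {x}]
         ((resb.syz (k - 2)) × (resb.syz (k - 1))))) :
    ∀ k : ℕ, 2 ≤ k → k ≤ p - 1 →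
      Module.finrank R (res.F k)
        = Module.finrank (R ⧸ Ideal.span {x}) (resb.F (k - 1))
          + Module.finrank (R ⧸ Ideal.span {x}) (resb.F k) := by
  intro k hk2 hkp
  obtain ⟨j, rfl⟩ : ∃ j, k = j + 2 := ⟨k - 2, by omega⟩
  obtain ⟨e⟩ := hsplit (j + 2) hk2 hkp
  rw [show j + 2 - 1 = j + 1 from rfl, show j + 2 - 2 = j from rfl] at e
  rw [show j + 2 - 1 = j + 1 from rfl]
  have hx : Ideal.span {x} ≤ maximalIdeal R := by
    rwa [Ideal.span_singleton_le_iff_mem, mem_maximalIdeal, mem_nonunits_iff]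
  apply Nat.cast_injective (R := ℕ∞)
  push_cast
  rw [res.finrank_eq_numGenerators_syz, resb.finrank_eq_numGenerators_syz,
    resb.finrank_eq_numGenerators_syz, ← numGenerators_quotient_smul_of_le hx,
    ← numGenerators_restrictScalars (S := R ⧸ Ideal.span {x}) Ideal.Quotient.mk_surjective,
    numGenerators_congr e, numGenerators_prod]

/-- Let `(R,m)` be a Noetherian local ring, `x` a non-zerodivisor and
non-unit, `R̄ = R/(x)`, and `M` a weakly liftable `R̄`-module of finite projective dimension
`p` over `R` such that for `2 ≤ k ≤ p − 1` the sequence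
`0 → Syz_{k-1}^{R̄}(M) → Syz_k^R(M)/x·Syz_k^R(M) → Syz_k^{R̄}(M) → 0` is split exact
(so the middle term is isomorphic to the direct sum of the outer ones).  Then the Betti
numbers satisfy `β_k^R(M) = β_{k-1}^{R̄}(M) + β_k^{R̄}(M)` for `2 ≤ k ≤ p − 1`. -/
theorem stmt10 (R : Type) [CommRing R] [IsNoetherianRing R] [IsLocalRing R]
    (x : R) (hx : x ∈ nonZeroDivisors R) (hxu : ¬IsUnit x)
    [IsLocalRing (R ⧸ Ideal.span {x})]
    (M : Type) [AddCommGroup M] [Module R M] [Module.Finite R M]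
    [Module (R ⧸ Ideal.span {x}) M] [IsScalarTower R (R ⧸ Ideal.span {x}) M]
    (hwl : Nonempty (WeakLifting R x M))
    (res : MinFreeRes R M) (resb : MinFreeRes (R ⧸ Ideal.span {x}) M)
    (p : ℕ) (hlen : ∀ k : ℕ, p < k → Subsingleton (res.F k))
    (htop : Nontrivial (res.F p))
    (hsplit : ∀ k : ℕ, 2 ≤ k → k ≤ p - 1 →
      Nonempty
        (((res.syz (k - 1)) ⧸
            ((Ideal.span {x} : Ideal R) • (⊤ : Submodule R (res.syz (k - 1)))))
          ≃ₗ[R ⧸ Ideal.span {x}]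
         ((resb.syz (k - 2)) × (resb.syz (k - 1))))) :
    ∀ k : ℕ, 2 ≤ k → k ≤ p - 1 →
      Module.finrank R (res.F k)
        = Module.finrank (R ⧸ Ideal.span {x}) (resb.F (k - 1))
          + Module.finrank (R ⧸ Ideal.span {x}) (resb.F k) :=
  stmt10_general R x hxu M res resb p hsplit
end

section
/- Let (R, m) be a local ring and suppose the Syzygy Theorem holds over R̄ = R/(x) for some x ∈ m. Let M be a weakly liftable R̄-module whose syzygies over R̄ satisfy rank Syz_j^{R̄}(M) ≥ j whenever Syz_j^{R̄}(M) is not free. If the syzygy sequences 0 → Syz_{k-1}^{R̄}(M) → Syz_k^R(M)/x → Syz_k^{R̄}(M) → 0 split for all relevant k, then rank_R Syz_k^R(M) ≥ 2k − 1 for 2 ≤ k ≤ pd_R M − 2. -/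
open CategoryTheory IsLocalRing

/-!
As `k + 1 < pd_R M`, `Syz_{k+1}^R` is not free, hence (`x` being regular on it) neither is
`Syz_{k+1}^R / x` over `R/(x)`. Since this splits as `Syz_k^{R/(x)} ⊕ Syz_{k+1}^{R/(x)}`, the
module `Syz_k^{R/(x)}` is not free (else the next syzygy vanishes), and then neither is
`Syz_{k-1}^{R/(x)}`. The Syzygy Theorem over `R/(x)` and the splitting at `k` give
`rank Syz_k^R / x ≥ (k - 1) + k`, and an `R/(x)`-independent family in `Syz_k^R / x` lifts to an
`R`-independent family in `Syz_k^R`.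
-/

open scoped Pointwise

noncomputable def QuotSMulTop.equivQuotSpanSingletonSMulTop {R : Type} [CommRing R] (x : R)
    (N : Type) [AddCommGroup N] [Module R N] :
    QuotSMulTop x N ≃ₗ[R ⧸ Ideal.span {x}] N ⧸ (Ideal.span {x} • (⊤ : Submodule R N)) :=
  (Submodule.quotEquivOfEq _ _ (Submodule.ideal_span_singleton_smul x ⊤).symm)
    |>.extendScalarsOfSurjective Ideal.Quotient.mk_surjective

section QuotSMulTop

variable {R : Type} [CommRing R] [IsNoetherianRing R] [IsLocalRing R] {x : R}
  {N : Type} [AddCommGroup N] [Module R N]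

/-- A relation among the `v i` has all coefficients in `(x)`, and dividing it by the regular
element `x` gives another relation; so its coefficients lie in `⋂ (x)ⁿ = 0` (Krull). -/
theorem LinearIndependent.of_quotSMulTop (hx : x ∈ maximalIdeal R) (reg : IsSMulRegular N x)
    {ι : Type*} {v : ι → N}
    (hv : LinearIndependent (R ⧸ Ideal.span {x})
      (fun i ↦ (Submodule.Quotient.mk (v i) : QuotSMulTop x N))) :
    LinearIndependent R v := by
  have mem_pow : ∀ n : ℕ, ∀ (s : Finset ι) (g : ι → R), ∑ i ∈ s, g i • v i = 0 →
      ∀ i ∈ s, g i ∈ Ideal.span {x} ^ n := by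
    intro n
    induction n with
    | zero => simp
    | succ n ih =>
      intro s g hg i hi
      have hmem : ∀ i ∈ s, g i ∈ Ideal.span {x} := by
        refine fun i hi ↦ Ideal.Quotient.eq_zero_iff_mem.mp
          (linearIndependent_iff'.mp hv s (fun i ↦ Ideal.Quotient.mk _ (g i)) ?_ i hi)
        have := congrArg (Submodule.mkQ (x • (⊤ : Submodule R N))) hg
        simpa [map_sum, Submodule.Quotient.mk_smul] using this
      choose c hc using fun i ↦ (em (i ∈ s)).elim
        (fun hi ↦ (Ideal.mem_span_singleton.mp (hmem i hi)).imp fun c hc _ ↦ hc)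
        (fun hi ↦ ⟨0, fun h ↦ absurd h hi⟩)
      have hc0 : ∑ i ∈ s, c i • v i = 0 := by
        refine reg.right_eq_zero_of_smul ?_
        rw [Finset.smul_sum, ← hg]
        exact Finset.sum_congr rfl fun i hi ↦ by rw [smul_smul, ← hc i hi]
      rw [hc i hi, pow_succ']
      exact Ideal.mul_mem_mul (Ideal.mem_span_singleton_self x) (ih s c hc0 i hi)
  rw [linearIndependent_iff']
  intro s g hg i hi
  have hinf : g i ∈ ⨅ n : ℕ, Ideal.span {x} ^ n :=
    (Submodule.mem_iInf _).mpr fun n ↦ mem_pow n s g hg i hi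
  rwa [Ideal.iInf_pow_eq_bot_of_isLocalRing _ ?_, Ideal.mem_bot] at hinf
  exact fun h ↦ (mem_maximalIdeal x).mp hx (Ideal.span_singleton_eq_top.mp h)

theorem rank_quotSMulTop_le (hx : x ∈ maximalIdeal R) (reg : IsSMulRegular N x) :
    Module.rank (R ⧸ Ideal.span {x}) (QuotSMulTop x N) ≤ Module.rank R N := by
  rw [Module.rank_def]
  refine ciSup_le' fun ⟨s, hs⟩ ↦ ?_
  choose v hv using fun q : s ↦ Submodule.Quotient.mk_surjective _ (q : QuotSMulTop x N)
  refine (LinearIndependent.of_quotSMulTop (v := v) hx reg ?_).cardinal_le_rank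
  simpa only [hv, id_eq] using hs.linearIndependent

end QuotSMulTop

/-- A surjection onto a projective module splits, so its kernel is a direct summand; lying
in `𝔪 • ⊤`, it then lies in `𝔪 • ker φ` and vanishes by Nakayama. -/
theorem LinearMap.ker_eq_bot_of_ker_le_maximalIdeal_smul {A : Type} [CommRing A]
    [IsNoetherianRing A] [IsLocalRing A] {F P : Type} [AddCommGroup F] [Module A F]
    [Module.Finite A F] [AddCommGroup P] [Module A P] [Module.Projective A P]
    {φ : F →ₗ[A] P} (hφ : Function.Surjective φ) (hker : ker φ ≤ maximalIdeal A • ⊤) :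
    ker φ = ⊥ := by
  obtain ⟨s, hs⟩ := Module.projective_lifting_property φ LinearMap.id hφ
  set π : F →ₗ[A] F := LinearMap.id - s ∘ₗ φ
  have hπ : ∀ z ∈ ker φ, π z = z := fun z hz ↦ by simp [π, mem_ker.mp hz]
  have hrange : range π ≤ ker φ := by
    rintro _ ⟨y, rfl⟩
    simp [π, ← LinearMap.comp_apply φ s, hs]
  refine Submodule.eq_bot_of_le_smul_of_le_jacobson_bot _ _ (IsNoetherian.noetherian _) ?_
    (maximalIdeal_le_jacobson _)
  intro z hz
  have hπz : π z ∈ (maximalIdeal A • ⊤ : Submodule A F).map π :=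
    Submodule.mem_map_of_mem (hker hz)
  rw [Submodule.map_smul'', Submodule.map_top] at hπz
  exact hπ z hz ▸ Submodule.smul_mono le_rfl hrange hπz

namespace MinFreeRes

variable {A : Type} [CommRing A] [IsLocalRing A] {M : Type} [AddCommGroup M] [Module A M]
  (res : MinFreeRes A M)

theorem range_d (j : ℕ) : LinearMap.range (res.d j).hom = res.syz j := by
  cases j with
  | zero => exact (LinearMap.exact_iff.mp res.exact_aug).symm
  | succ j => exact (LinearMap.exact_iff.mp (res.exact j)).symm

theorem syz_le_maximalIdeal_smul : ∀ j, res.syz j ≤ maximalIdeal A • ⊤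
  | 0 => res.min_aug
  | j + 1 => res.range_d (j + 1) ▸ res.min (j + 1)

theorem subsingleton_of_syz_eq_bot {j : ℕ} (h : res.syz j = ⊥) :
    Subsingleton (res.F (j + 1)) := by
  have := res.fin (j + 1)
  have htop : res.syz (j + 1) = ⊤ := by
    rw [MinFreeRes.syz, LinearMap.ker_eq_top, ← LinearMap.range_eq_bot, range_d, h]
  have hbot := Submodule.eq_bot_of_le_smul_of_le_jacobson_bot (maximalIdeal A) ⊤
    Module.Finite.fg_top (htop ▸ res.syz_le_maximalIdeal_smul (j + 1))
    (maximalIdeal_le_jacobson _)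
  exact (Submodule.subsingleton_iff A).mp (subsingleton_iff_bot_eq_top.mp hbot.symm)

theorem syz_eq_bot_of_le {i j : ℕ} (h : res.syz i = ⊥) (hij : i ≤ j) : res.syz j = ⊥ := by
  induction j, hij using Nat.le_induction with
  | base => exact h
  | succ j _ ih =>
    have := res.subsingleton_of_syz_eq_bot ih
    exact Submodule.eq_bot_of_subsingleton

theorem syz_ne_bot_of_lt {p j : ℕ} [Nontrivial (res.F p)] (hj : j < p) : res.syz j ≠ ⊥ := by
  obtain ⟨q, rfl⟩ : ∃ q, p = q + 1 := ⟨p - 1, by omega⟩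
  exact fun h ↦ not_subsingleton (res.F (q + 1))
    (res.subsingleton_of_syz_eq_bot (res.syz_eq_bot_of_le h (by omega)))

theorem syz_succ_eq_bot_of_free [IsNoetherianRing A] {j : ℕ}
    (hfree : Module.Free A (res.syz j)) : res.syz (j + 1) = ⊥ := by
  have := res.fin (j + 1)
  have : Module.Free A (LinearMap.range (res.d j).hom) := by rwa [range_d]
  have hker : LinearMap.ker (res.d j).hom.rangeRestrict = res.syz (j + 1) :=
    LinearMap.ker_rangeRestrict _
  exact hker ▸ LinearMap.ker_eq_bot_of_ker_le_maximalIdeal_smul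
    (res.d j).hom.surjective_rangeRestrict (hker ▸ res.syz_le_maximalIdeal_smul (j + 1))

theorem free_syz_succ_of_free [IsNoetherianRing A] {j : ℕ} (hfree : Module.Free A (res.syz j)) :
    Module.Free A (res.syz (j + 1)) := by
  rw [res.syz_succ_eq_bot_of_free hfree]
  infer_instance

theorem isSMulRegular_syz {x : A} (hx : x ∈ nonZeroDivisors A) (j : ℕ) :
    IsSMulRegular (res.syz j) x :=
  have := res.free j
  (Module.Flat.isSMulRegular_of_nonZeroDivisors hx).submodule _ _

theorem not_free_quotSMulTop_syz [IsNoetherianRing A] {x : A} (hxm : x ∈ maximalIdeal A)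
    (hx : x ∈ nonZeroDivisors A) {p j : ℕ} [Nontrivial (res.F p)] (hj : j + 1 < p) :
    ¬ Module.Free (A ⧸ Ideal.span {x}) (QuotSMulTop x (res.syz j)) := fun h ↦ by
  have := res.fin j
  have := Module.finitePresentation_of_finite A (res.syz j)
  refine res.syz_ne_bot_of_lt hj (res.syz_succ_eq_bot_of_free ?_)
  exact (Module.free_quotSMulTop_iff_free _ _ (maximalIdeal_le_jacobson _ hxm)
    (res.isSMulRegular_syz hx j)).mp h

end MinFreeRes

theorem stmt11_general (R : Type) [CommRing R] [IsNoetherianRing R] [IsLocalRing R]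
    (x : R) (hxm : x ∈ maximalIdeal R) (hx : x ∈ nonZeroDivisors R)
    [IsLocalRing (R ⧸ Ideal.span {x})]
    (M : Type) [AddCommGroup M] [Module R M]
    [Module (R ⧸ Ideal.span {x}) M]
    (res : MinFreeRes R M) (resb : MinFreeRes (R ⧸ Ideal.span {x}) M)
    (p : ℕ)
    (htop : Nontrivial (res.F p))
    (hsyzb : ∀ j : ℕ, 1 ≤ j → ¬ Module.Free (R ⧸ Ideal.span {x}) (resb.syz (j - 1)) →
      (j : Cardinal) ≤ Module.rank (R ⧸ Ideal.span {x}) (resb.syz (j - 1)))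
    (hsplit : ∀ k : ℕ, 2 ≤ k → k ≤ p - 1 →
      Nonempty
        (((res.syz (k - 1)) ⧸
            ((Ideal.span {x} : Ideal R) • (⊤ : Submodule R (res.syz (k - 1)))))
          ≃ₗ[R ⧸ Ideal.span {x}]
         ((resb.syz (k - 2)) × (resb.syz (k - 1))))) :
    ∀ k : ℕ, 2 ≤ k → k ≤ p - 2 →
      ((2 * k - 1 : ℕ) : Cardinal) ≤ Module.rank R (res.syz (k - 1)) := by
  intro k hk2 hkp
  obtain ⟨m, rfl⟩ : ∃ m, k = m + 2 := ⟨k - 2, by omega⟩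
  have hk_not_free : ¬ Module.Free (R ⧸ Ideal.span {x}) (resb.syz (m + 1)) := fun h ↦ by
    obtain ⟨e⟩ : Nonempty (_ ≃ₗ[R ⧸ Ideal.span {x}] resb.syz (m + 1) × resb.syz (m + 2)) :=
      hsplit (m + 3) (by omega) (by omega)
    have := resb.free_syz_succ_of_free h
    exact res.not_free_quotSMulTop_syz hxm hx (p := p) (j := m + 2) (by omega)
      (.of_equiv ((QuotSMulTop.equivQuotSpanSingletonSMulTop x _).trans e).symm)
  have hk1_not_free : ¬ Module.Free (R ⧸ Ideal.span {x}) (resb.syz m) :=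
    fun h ↦ hk_not_free (resb.free_syz_succ_of_free h)
  obtain ⟨e⟩ := hsplit (m + 2) (by omega) (by omega)
  calc ((2 * (m + 2) - 1 : ℕ) : Cardinal) = ((m + 1 + (m + 2) : ℕ) : Cardinal) := by
        congr 1; omega
    _ = ((m + 1 : ℕ) : Cardinal) + ((m + 2 : ℕ) : Cardinal) := Nat.cast_add _ _
    _ ≤ Module.rank (R ⧸ Ideal.span {x}) (resb.syz m) +
        Module.rank (R ⧸ Ideal.span {x}) (resb.syz (m + 1)) :=
      add_le_add (hsyzb (m + 1) (by omega) hk1_not_free) (hsyzb (m + 2) (by omega) hk_not_free)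
    _ ≤ Module.rank (R ⧸ Ideal.span {x}) (resb.syz m × resb.syz (m + 1)) :=
      rank_add_rank_le_rank_prod _ _
    _ = Module.rank (R ⧸ Ideal.span {x}) (QuotSMulTop x (res.syz (m + 1))) :=
      ((QuotSMulTop.equivQuotSpanSingletonSMulTop x _).trans e).rank_eq.symm
    _ ≤ Module.rank R (res.syz (m + 1)) :=
      rank_quotSMulTop_le hxm (res.isSMulRegular_syz hx _)

/-- Let `(R,m)` be a Noetherian local ring, `x ∈ m` a non-zerodivisor and
non-unit, `R̄ = R/(x)`, and `M` a weakly liftable `R̄`-module whose syzygies over `R̄`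
satisfy `rank Syz_j^{R̄}(M) ≥ j` whenever `Syz_j^{R̄}(M)` is not free (the Syzygy Theorem
over `R̄`).  If the syzygy sequences `0 → Syz_{k-1}^{R̄} → Syz_k^R/x → Syz_k^{R̄} → 0`
split, then `rank_R Syz_k^R(M) ≥ 2k − 1` for `2 ≤ k ≤ pd_R M − 2`. -/
theorem stmt11 (R : Type) [CommRing R] [IsNoetherianRing R] [IsLocalRing R]
    (x : R) (hxm : x ∈ maximalIdeal R) (hx : x ∈ nonZeroDivisors R) (hxu : ¬IsUnit x)
    [IsLocalRing (R ⧸ Ideal.span {x})]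
    (M : Type) [AddCommGroup M] [Module R M] [Module.Finite R M]
    [Module (R ⧸ Ideal.span {x}) M] [IsScalarTower R (R ⧸ Ideal.span {x}) M]
    (hwl : Nonempty (WeakLifting R x M))
    (res : MinFreeRes R M) (resb : MinFreeRes (R ⧸ Ideal.span {x}) M)
    (p : ℕ) (hlen : ∀ k : ℕ, p < k → Subsingleton (res.F k))
    (htop : Nontrivial (res.F p))
    (hsyzb : ∀ j : ℕ, 1 ≤ j → ¬ Module.Free (R ⧸ Ideal.span {x}) (resb.syz (j - 1)) →
      (j : Cardinal) ≤ Module.rank (R ⧸ Ideal.span {x}) (resb.syz (j - 1)))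
    (hsplit : ∀ k : ℕ, 2 ≤ k → k ≤ p - 1 →
      Nonempty
        (((res.syz (k - 1)) ⧸
            ((Ideal.span {x} : Ideal R) • (⊤ : Submodule R (res.syz (k - 1)))))
          ≃ₗ[R ⧸ Ideal.span {x}]
         ((resb.syz (k - 2)) × (resb.syz (k - 1))))) :
    ∀ k : ℕ, 2 ≤ k → k ≤ p - 2 →
      ((2 * k - 1 : ℕ) : Cardinal) ≤ Module.rank R (res.syz (k - 1)) :=
  stmt11_general R x hxm hx M res resb p htop hsyzb hsplit
end

section
/- Let V be a DVR with p in its maximal ideal, R = V[[x, y]], and I = (x² + y² + p², px, py) ⊆ R. Then p³ ∈ m_R·I but p² ∉ I. -/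
open MvPowerSeries IsLocalRing

/-!
The identity `p³ = p (x² + y² + p²) - x (p x) - y (p y)` puts `p³` in `m_R I`. If instead
`p² = a (x² + y² + p²) + b (p x) + c (p y)`, comparing constant terms gives `a(0) = 1`, so `a` is
a unit and `p` divides `x² + y² + p²`, hence `x² + y²`; but its `x²`-coefficient is `1` and `p`
is not a unit.
-/

theorem pow_three_mem_mul_span {A : Type*} [CommRing A] {m : Ideal A} {a x y : A}
    (ha : a ∈ m) (hx : x ∈ m) (hy : y ∈ m) :
    a ^ 3 ∈ m * Ideal.span {x ^ 2 + y ^ 2 + a ^ 2, a * x, a * y} := by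
  have hspan {z : A} (hz : z ∈ ({x ^ 2 + y ^ 2 + a ^ 2, a * x, a * y} : Set A)) :
      z ∈ Ideal.span {x ^ 2 + y ^ 2 + a ^ 2, a * x, a * y} := Ideal.subset_span hz
  have key : a ^ 3 = a * (x ^ 2 + y ^ 2 + a ^ 2) - x * (a * x) - y * (a * y) := by ring
  rw [key]
  exact sub_mem (sub_mem (Ideal.mul_mem_mul ha (hspan (by simp)))
    (Ideal.mul_mem_mul hx (hspan (by simp)))) (Ideal.mul_mem_mul hy (hspan (by simp)))

namespace MvPowerSeries

variable {σ R : Type*} [CommRing R]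

theorem mem_maximalIdeal_iff [IsLocalRing R] {φ : MvPowerSeries σ R} :
    φ ∈ maximalIdeal (MvPowerSeries σ R) ↔ constantCoeff φ ∈ maximalIdeal R := by
  simp only [mem_maximalIdeal, mem_nonunits_iff, isUnit_iff_constantCoeff]

theorem dvd_coeff_of_C_dvd {p : R} {φ : MvPowerSeries σ R} (h : C p ∣ φ) (n : σ →₀ ℕ) :
    p ∣ coeff n φ := by
  obtain ⟨ψ, rfl⟩ := h
  exact ⟨coeff n ψ, coeff_C_mul n ψ p⟩

theorem coeff_single_X_sq_add_X_sq [DecidableEq σ] {i j : σ} (hij : i ≠ j) :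
    coeff (Finsupp.single i 2) (X i ^ 2 + X j ^ 2 : MvPowerSeries σ R) = 1 := by
  simp [coeff_X_pow, Finsupp.single_left_inj two_ne_zero, hij]

theorem not_C_dvd_X_sq_add_X_sq {p : R} (hp : ¬IsUnit p) {i j : σ} (hij : i ≠ j) :
    ¬C p ∣ (X i ^ 2 + X j ^ 2 : MvPowerSeries σ R) := fun h ↦ by
  classical
  exact hp (isUnit_of_dvd_one (coeff_single_X_sq_add_X_sq (R := R) hij ▸ dvd_coeff_of_C_dvd h _))

theorem C_sq_notMem_span [IsDomain R] {p : R} (hp : p ≠ 0) (hpu : ¬IsUnit p) {i j : σ}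
    (hij : i ≠ j) :
    (C p ^ 2 : MvPowerSeries σ R) ∉
      Ideal.span {X i ^ 2 + X j ^ 2 + C p ^ 2, C p * X i, C p * X j} := by
  intro hmem
  obtain ⟨a, z, hz, heq⟩ := Ideal.mem_span_insert.mp hmem
  obtain ⟨b, c, rfl⟩ := Ideal.mem_span_pair.mp hz
  have ha : IsUnit a := by
    have h0 := congrArg constantCoeff heq
    simp only [map_add, map_mul, map_pow, constantCoeff_C, constantCoeff_X] at h0
    have : constantCoeff a = 1 := by
      refine (mul_left_cancel₀ (pow_ne_zero 2 hp) ?_).symm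
      linear_combination h0
    exact isUnit_iff_constantCoeff.mpr (this ▸ isUnit_one)
  have hdvd : C p ∣ X i ^ 2 + X j ^ 2 + C p ^ 2 :=
    ha.dvd_mul_left.mp ⟨C p - b * X i - c * X j, by linear_combination -heq⟩
  exact not_C_dvd_X_sq_add_X_sq hpu hij ((dvd_add_left (dvd_pow_self _ two_ne_zero)).mp hdvd)

end MvPowerSeries

/-- Let `V` be a DVR with `0 ≠ p` in its maximal ideal, `R = V[[x, y]]`,
and `I = (x² + y² + p², px, py) ⊆ R`.  Then `p³ ∈ m_R · I` but `p² ∉ I`. -/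
theorem stmt13 (V : Type) [CommRing V] [IsDomain V] [IsDiscreteValuationRing V]
    (p : V) (hp : p ≠ 0) (hpm : p ∈ IsLocalRing.maximalIdeal V) :
    (C (σ := Fin 2) (R := V) p) ^ 3 ∈
      (IsLocalRing.maximalIdeal (MvPowerSeries (Fin 2) V)) *
        (Ideal.span {(X 0) ^ 2 + (X 1) ^ 2 + (C (σ := Fin 2) (R := V) p) ^ 2,
          (C (σ := Fin 2) (R := V) p) * X 0, (C (σ := Fin 2) (R := V) p) * X 1}) ∧
    (C (σ := Fin 2) (R := V) p) ^ 2 ∉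
      (Ideal.span {(X 0) ^ 2 + (X 1) ^ 2 + (C (σ := Fin 2) (R := V) p) ^ 2,
        (C (σ := Fin 2) (R := V) p) * X 0, (C (σ := Fin 2) (R := V) p) * X 1} :
          Ideal (MvPowerSeries (Fin 2) V)) := by
  have hC : C p ∈ maximalIdeal (MvPowerSeries (Fin 2) V) :=
    mem_maximalIdeal_iff.mpr (by rwa [constantCoeff_C])
  have hX (i : Fin 2) : X i ∈ maximalIdeal (MvPowerSeries (Fin 2) V) :=
    mem_maximalIdeal_iff.mpr (by simp only [constantCoeff_X, zero_mem])
  exact ⟨pow_three_mem_mul_span hC (hX 0) (hX 1),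
    C_sq_notMem_span hp ((mem_maximalIdeal _).mp hpm) Fin.zero_ne_one⟩
end

section
/- Let R be a local ring, x a non-zerodivisor, S = R/(x^n). Suppose 0 → M' → M → M'' → 0 is a short exact sequence of reflexive S-modules that is also dual exact, and that pd_R M' ≤ 1 (i.e., the first R-syzygy Z' of M' is R-free). Then the induced short exact sequence of first R-syzygies 0 → Z' → Z → Z'' → 0 is split exact. -/
/-!
Write `c = xⁿ`, `Z' = ker π'` and `Z = ker π`. As `Z'` is finite free, `j` splits as soon as
every functional `φ` on `Z'` extends along `j`. Since `c` kills `M'`, `f ↦ φ (c f) mod c` is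
a functional on `F'` vanishing on `Z'`, hence an element `ψ` of the `R/(c)`-dual of `M'`.
Dual exactness extends `ψ` to `χ` on `M`, and freeness of `F` lifts `χ ∘ π` to `θ : F → R`.
Now `θ` is divisible by `c` on `Z`, and `θ ∘ u - φ (c ·)` is divisible by `c` on `F'`. As `c`
is a non-zerodivisor, the two quotients, the second extended to `F` through the split
injection `u`, differ by the required extension of `φ`.
-/

open Function LinearMap Module

section General

variable {R : Type*} [CommRing R]

theorem exists_mul_eq_of_forall_dvd {A : Type*} [AddCommGroup A] [Module R A] {c : R}
    (hc : c ∈ nonZeroDivisors R) (L : A →ₗ[R] R) (hL : ∀ a, c ∣ L a) :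
    ∃ D : A →ₗ[R] R, ∀ a, c * D a = L a := by
  choose D hD using hL
  have cancel {r s : R} : c * r = c * s → r = s := (mul_cancel_left_mem_nonZeroDivisors hc).mp
  refine ⟨{ toFun := D, map_add' := fun a b => cancel ?_, map_smul' := fun r a => cancel ?_ },
    fun a => (hD a).symm⟩
  · rw [mul_add, ← hD, ← hD, ← hD, map_add]
  · rw [← hD, map_smul, hD, smul_eq_mul, RingHom.id_apply, smul_eq_mul, mul_left_comm]

theorem LinearMap.exists_comp_eq_of_surjective_of_ker_le {M N P : Type*} [AddCommGroup M]
    [AddCommGroup N] [AddCommGroup P] [Module R M] [Module R N] [Module R P]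
    {f : M →ₗ[R] N} (hf : Surjective f) {g : M →ₗ[R] P} (h : ker f ≤ ker g) :
    ∃ g' : N →ₗ[R] P, g' ∘ₗ f = g :=
  ⟨(ker f).liftQ g h ∘ₗ (f.quotKerEquivOfSurjective hf).symm.toLinearMap, by
    ext m; simp [quotKerEquivOfSurjective_symm_apply]⟩

theorem LinearMap.dualMap_surjective_of_leftInverse {M N : Type*} [AddCommGroup M]
    [AddCommGroup N] [Module R M] [Module R N] {u : M →ₗ[R] N} {r : N →ₗ[R] M}
    (hr : r ∘ₗ u = LinearMap.id) : Surjective u.dualMap :=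
  RightInverse.surjective (f := u.dualMap) (g := r.dualMap) fun φ => by
    rw [← LinearMap.comp_apply (f := u.dualMap), LinearMap.dualMap_comp_dualMap, hr]; rfl

theorem LinearMap.exists_leftInverse_of_dualMap_surjective {N P : Type*} [AddCommGroup N]
    [AddCommGroup P] [Module R N] [Module R P] [Free R N] [Module.Finite R N]
    {j : N →ₗ[R] P} (hj : Surjective j.dualMap) :
    ∃ σ : P →ₗ[R] N, σ ∘ₗ j = LinearMap.id := by
  let b := Free.chooseBasis R N
  choose Φ hΦ using fun i => hj (b.coord i)
  refine ⟨∑ i, (Φ i).smulRight (b i), LinearMap.ext fun z => ?_⟩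
  have hΦ' (i) : Φ i (j z) = b.coord i z := by rw [← dualMap_apply, hΦ]
  simp only [LinearMap.comp_apply, LinearMap.sum_apply, LinearMap.smulRight_apply, hΦ',
    Basis.coord_apply, b.sum_repr, LinearMap.id_apply]

end General

section Quotient

variable {R : Type*} [CommRing R] {c : R}
  {M' M F' F : Type*} [AddCommGroup M'] [AddCommGroup M] [AddCommGroup F'] [AddCommGroup F]
  [Module R M'] [Module R M] [Module R F'] [Module R F]
  [Module (R ⧸ Ideal.span {c}) M'] [IsScalarTower R (R ⧸ Ideal.span {c}) M']
  [Module (R ⧸ Ideal.span {c}) M] [IsScalarTower R (R ⧸ Ideal.span {c}) M]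

variable (c) in
theorem smul_eq_zero_of_module_quotient_span_singleton (m : M') : c • m = 0 := by
  rw [← algebraMap_smul (R ⧸ Ideal.span {c}) c m, Ideal.Quotient.algebraMap_eq,
    Ideal.Quotient.mk_singleton_self, zero_smul]

variable (c) in
def smulToKer (π' : F' →ₗ[R] M') : F' →ₗ[R] ker π' :=
  (c • LinearMap.id).codRestrict (ker π') fun f => by
    simp [smul_eq_zero_of_module_quotient_span_singleton]

theorem smulToKer_coe (π' : F' →ₗ[R] M') (z : ker π') : smulToKer c π' z = c • z := rfl

theorem exists_dual_comp_eq_mk_smulToKer {π' : F' →ₗ[R] M'} (hπ' : Surjective π')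
    (φ : Dual R (ker π')) : ∃ ψ : Dual (R ⧸ Ideal.span {c}) M',
      ∀ f, ψ (π' f) = Ideal.Quotient.mk _ (φ (smulToKer c π' f)) := by
  let Ψ := Algebra.linearMap R (R ⧸ Ideal.span {c}) ∘ₗ φ ∘ₗ smulToKer c π'
  have hker : ker π' ≤ ker Ψ := fun z hz => by
    change Ideal.Quotient.mk _ (φ (smulToKer c π' (⟨z, hz⟩ : ker π'))) = 0
    rw [smulToKer_coe, map_smul, smul_eq_mul, Ideal.Quotient.eq_zero_iff_dvd]
    exact dvd_mul_right c _
  obtain ⟨ψ, hψ⟩ := exists_comp_eq_of_surjective_of_ker_le hπ' hker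
  exact ⟨ψ.extendScalarsOfSurjective Ideal.Quotient.mk_surjective,
    fun f => LinearMap.congr_fun hψ f⟩

theorem syzygy_dualMap_surjective [Projective R F] (hc : c ∈ nonZeroDivisors R)
    {α : M' →ₗ[R ⧸ Ideal.span {c}] M} (hα : Surjective α.dualMap)
    {u : F' →ₗ[R] F} (hu : Surjective u.dualMap)
    {π' : F' →ₗ[R] M'} (hπ' : Surjective π') {π : F →ₗ[R] M}
    (hcomm : π ∘ₗ u = α.restrictScalars R ∘ₗ π')
    {j : ker π' →ₗ[R] ker π} (hj : ∀ z, (j z : F) = u z) :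
    Surjective j.dualMap := by
  intro φ
  obtain ⟨ψ, hψ⟩ := exists_dual_comp_eq_mk_smulToKer (c := c) hπ' φ
  obtain ⟨χ, hχ⟩ := hα ψ
  obtain ⟨θ, hθ⟩ := projective_lifting_property
    (Algebra.linearMap R (R ⧸ Ideal.span {c})) (χ.restrictScalars R ∘ₗ π)
    Ideal.Quotient.mk_surjective
  have hθ' (f : F) : Ideal.Quotient.mk _ (θ f) = χ (π f) := LinearMap.congr_fun hθ f
  have hdvd_F' (f : F') : c ∣ (θ ∘ₗ u - φ ∘ₗ smulToKer c π') f := by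
    rw [← Ideal.Quotient.eq_zero_iff_dvd, LinearMap.sub_apply, map_sub, LinearMap.comp_apply,
      hθ', ← LinearMap.comp_apply π u, hcomm, LinearMap.comp_apply, LinearMap.comp_apply,
      ← hψ, ← hχ, dualMap_apply]
    exact sub_self _
  have hdvd_Z (z : ker π) : c ∣ (θ ∘ₗ (ker π).subtype) z := by
    rw [← Ideal.Quotient.eq_zero_iff_dvd, LinearMap.comp_apply, hθ', Submodule.subtype_apply,
      mem_ker.mp z.2, map_zero]
  obtain ⟨μ, hμ⟩ := exists_mul_eq_of_forall_dvd hc _ hdvd_F'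
  obtain ⟨μ', hμ'⟩ := hu μ
  obtain ⟨d, hd⟩ := exists_mul_eq_of_forall_dvd hc _ hdvd_Z
  refine ⟨d - μ' ∘ₗ (ker π).subtype,
    ext fun z => (mul_cancel_left_mem_nonZeroDivisors hc).mp ?_⟩
  have hμz : c * μ' (u z) = θ (u z) - c * φ z := by
    rw [← dualMap_apply u μ', hμ', hμ, LinearMap.sub_apply, LinearMap.comp_apply,
      LinearMap.comp_apply, smulToKer_coe, map_smul, smul_eq_mul]
  calc c * (d - μ' ∘ₗ (ker π).subtype) (j z)
      = θ (u z) - c * μ' (u z) := by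
        rw [LinearMap.sub_apply, mul_sub, hd, LinearMap.comp_apply, LinearMap.comp_apply,
          Submodule.subtype_apply, hj]
    _ = c * φ z := by rw [hμz]; ring

end Quotient

theorem stmt15_general (R : Type) [CommRing R] [IsNoetherianRing R]
    (x : R) (hx : x ∈ nonZeroDivisors R) (n : ℕ)
    (M' M M'' : Type)
    [AddCommGroup M'] [AddCommGroup M] [AddCommGroup M'']
    [Module R M'] [Module R M]
    [Module (R ⧸ Ideal.span {x ^ n}) M'] [IsScalarTower R (R ⧸ Ideal.span {x ^ n}) M']
    [Module (R ⧸ Ideal.span {x ^ n}) M] [IsScalarTower R (R ⧸ Ideal.span {x ^ n}) M]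
    [Module (R ⧸ Ideal.span {x ^ n}) M'']
    (α : M' →ₗ[R ⧸ Ideal.span {x ^ n}] M) (β : M →ₗ[R ⧸ Ideal.span {x ^ n}] M'')
    -- the sequence is dual exact:
    (hdual : Function.Surjective α.dualMap ∧ Function.Injective β.dualMap ∧
      Function.Exact β.dualMap α.dualMap)
    -- split exact sequence of finite free `R`-modules above it:
    (F' F F'' : Type)
    [AddCommGroup F'] [AddCommGroup F] [AddCommGroup F'']
    [Module R F'] [Module R F] [Module R F'']
    [Module.Free R F]
    [Module.Finite R F']
    (u : F' →ₗ[R] F) (v : F →ₗ[R] F'')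
    (hu : Function.Injective u) (huv : Function.Exact u v)
    (hsplitrow : ∃ s : F'' →ₗ[R] F, v.comp s = LinearMap.id)
    (π' : F' →ₗ[R] M') (π : F →ₗ[R] M)
    (hπ' : Function.Surjective π')
    (hcomm₁ : π.comp u = (α.restrictScalars R).comp π')
    -- the induced short exact sequence of syzygies:
    (j : (LinearMap.ker π') →ₗ[R] (LinearMap.ker π))
    (hj : ∀ z : LinearMap.ker π', ((j z : F)) = u (z : F'))
    -- `pd_R M' ≤ 1`, i.e. the first syzygy `Z'` of `M'` is `R`-free:
    (hZ'free : Module.Free R (LinearMap.ker π')) :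
    ∃ σ : (LinearMap.ker π) →ₗ[R] (LinearMap.ker π'), σ.comp j = LinearMap.id := by
  obtain ⟨-, r, hr⟩ := (huv.split_tfae'.out 0 1 rfl rfl).mp ⟨hu, hsplitrow⟩
  exact exists_leftInverse_of_dualMap_surjective <| syzygy_dualMap_surjective (pow_mem hx n)
    hdual.1 (dualMap_surjective_of_leftInverse hr) hπ' hcomm₁ hj

/-- In the setting of a dual-exact short exact sequence of reflexive
`S`-modules (`S = R/(xⁿ)`) with a horseshoe diagram of first `R`-syzygies
`0 → Z' → Z → Z'' → 0`, if moreover `pd_R M' ≤ 1`, i.e. the first syzygy `Z'` of `M'` is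
`R`-free, then the short exact sequence of syzygies is split exact. -/
theorem stmt15 (R : Type) [CommRing R] [IsNoetherianRing R] [IsLocalRing R]
    (x : R) (hx : x ∈ nonZeroDivisors R) (n : ℕ) (hn : 0 < n)
    (M' M M'' : Type)
    [AddCommGroup M'] [AddCommGroup M] [AddCommGroup M'']
    [Module R M'] [Module R M] [Module R M'']
    [Module (R ⧸ Ideal.span {x ^ n}) M'] [IsScalarTower R (R ⧸ Ideal.span {x ^ n}) M']
    [Module (R ⧸ Ideal.span {x ^ n}) M] [IsScalarTower R (R ⧸ Ideal.span {x ^ n}) M]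
    [Module (R ⧸ Ideal.span {x ^ n}) M''] [IsScalarTower R (R ⧸ Ideal.span {x ^ n}) M'']
    [Module.Finite (R ⧸ Ideal.span {x ^ n}) M']
    [Module.Finite (R ⧸ Ideal.span {x ^ n}) M]
    [Module.Finite (R ⧸ Ideal.span {x ^ n}) M'']
    [Module.IsReflexive (R ⧸ Ideal.span {x ^ n}) M']
    [Module.IsReflexive (R ⧸ Ideal.span {x ^ n}) M]
    [Module.IsReflexive (R ⧸ Ideal.span {x ^ n}) M'']
    (α : M' →ₗ[R ⧸ Ideal.span {x ^ n}] M) (β : M →ₗ[R ⧸ Ideal.span {x ^ n}] M'')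
    (hα : Function.Injective α) (hβ : Function.Surjective β)
    (hαβ : Function.Exact α β)
    -- the sequence is dual exact:
    (hdual : Function.Surjective α.dualMap ∧ Function.Injective β.dualMap ∧
      Function.Exact β.dualMap α.dualMap)
    -- split exact sequence of finite free `R`-modules above it:
    (F' F F'' : Type)
    [AddCommGroup F'] [AddCommGroup F] [AddCommGroup F'']
    [Module R F'] [Module R F] [Module R F'']
    [Module.Free R F'] [Module.Free R F] [Module.Free R F'']
    [Module.Finite R F'] [Module.Finite R F] [Module.Finite R F'']
    (u : F' →ₗ[R] F) (v : F →ₗ[R] F'')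
    (hu : Function.Injective u) (hv : Function.Surjective v) (huv : Function.Exact u v)
    (hsplitrow : ∃ s : F'' →ₗ[R] F, v.comp s = LinearMap.id)
    (π' : F' →ₗ[R] M') (π : F →ₗ[R] M) (π'' : F'' →ₗ[R] M'')
    (hπ' : Function.Surjective π') (hπ : Function.Surjective π)
    (hπ'' : Function.Surjective π'')
    (hcomm₁ : π.comp u = (α.restrictScalars R).comp π')
    (hcomm₂ : π''.comp v = (β.restrictScalars R).comp π)
    -- the induced short exact sequence of syzygies:
    (j : (LinearMap.ker π') →ₗ[R] (LinearMap.ker π))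
    (q : (LinearMap.ker π) →ₗ[R] (LinearMap.ker π''))
    (hj : ∀ z : LinearMap.ker π', ((j z : F)) = u (z : F'))
    (hq : ∀ z : LinearMap.ker π, ((q z : F'')) = v (z : F))
    (hjinj : Function.Injective j) (hqsurj : Function.Surjective q)
    (hjq : Function.Exact j q)
    -- `pd_R M' ≤ 1`, i.e. the first syzygy `Z'` of `M'` is `R`-free:
    (hZ'free : Module.Free R (LinearMap.ker π')) :
    ∃ σ : (LinearMap.ker π) →ₗ[R] (LinearMap.ker π'), σ.comp j = LinearMap.id :=
  stmt15_general R x hx n M' M M'' α β hdual F' F F'' u v hu huv hsplitrow π' π hπ' hcomm₁ j hj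
    hZ'free
end

section
/- Let R be a Noetherian domain and E a finitely generated torsion-free R-module such that E[x^{-1}] is free over R[x^{-1}] for a nonzero x ∈ R. Then E contains a free submodule F with x^s(E/F) = 0 for some s ≥ 0. -/
/-!
Clearing the denominators of an `R[x⁻¹]`-basis of `E[x⁻¹]` rescales it by units into a basis
made of images of elements of `E`. Since `E → E[x⁻¹]` is injective (torsion-freeness) and
`R → R[x⁻¹]` is injective, these elements are `R`-independent and span a free submodule `F`.
As `F[x⁻¹] = E[x⁻¹]`, every element of `E ⧸ F` is killed by a power of `x`, and since `E ⧸ F`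
is finitely generated a single power kills all of it.
-/

open Submodule nonZeroDivisors

section IsLocalizedModule

variable {R : Type*} [CommRing R] (S : Submonoid R) {Rₛ : Type*} [CommRing Rₛ] [Algebra R Rₛ]
  [IsLocalization S Rₛ] {M Mₛ : Type*} [AddCommGroup M] [Module R M] [AddCommGroup Mₛ]
  [Module R Mₛ] [Module Rₛ Mₛ] [IsScalarTower R Rₛ Mₛ] (f : M →ₗ[R] Mₛ) [IsLocalizedModule S f]

include S in
theorem Module.Basis.exists_basis_eq_comp_of_isLocalizedModule {ι : Type*}
    (b : Module.Basis ι Rₛ Mₛ) : ∃ (b' : Module.Basis ι Rₛ Mₛ) (v : ι → M), ⇑b' = f ∘ v := by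
  choose p hp using fun i ↦ IsLocalizedModule.mk'_surjective S f (b i)
  let u : ι → Rₛˣ := fun i ↦ (IsLocalization.map_units Rₛ (p i).2).unit
  refine ⟨b.unitsSMul u, fun i ↦ (p i).1, funext fun i ↦ ?_⟩
  rw [Module.Basis.unitsSMul_apply, Units.smul_def, IsUnit.unit_spec, algebraMap_smul,
    Function.comp_apply, ← hp i, Function.uncurry_apply_pair, ← Submonoid.smul_def,
    IsLocalizedModule.mk'_cancel']

theorem Submodule.exists_smul_mem_of_localized'_eq_top {N : Submodule R M}
    (h : N.localized' Rₛ S f = ⊤) (m : M) : ∃ s : S, s • m ∈ N := by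
  obtain ⟨n, hn, s, hs⟩ := (mem_localized' Rₛ S f N (f m)).mp (h ▸ mem_top)
  rw [IsLocalizedModule.mk'_eq_iff, Submonoid.smul_def, ← LinearMap.map_smul_of_tower] at hs
  obtain ⟨c, hc⟩ := IsLocalizedModule.exists_of_eq (S := S) hs
  exact ⟨c * s, by rw [mul_smul, Submonoid.smul_def s, ← hc]; exact N.smul_mem _ hn⟩

end IsLocalizedModule

theorem Module.Finite.exists_smul_eq_zero_of_forall {R M : Type*} [CommRing R] [AddCommGroup M]
    [Module R M] [Module.Finite R M] {S : Submonoid R} (h : ∀ m : M, ∃ s ∈ S, s • m = 0) :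
    ∃ s ∈ S, ∀ m : M, s • m = 0 := by
  obtain ⟨T, hT⟩ := ‹Module.Finite R M›
  choose s hsS hs using h
  refine ⟨∏ g ∈ T, s g, prod_mem fun g _ ↦ hsS g, fun m ↦ ?_⟩
  have hker : span R (T : Set M) ≤ LinearMap.ker (LinearMap.lsmul R M (∏ g ∈ T, s g)) :=
    span_le.mpr fun g hg ↦ by
      obtain ⟨k, hk⟩ := Finset.dvd_prod_of_mem s hg
      simp only [SetLike.mem_coe, LinearMap.mem_ker, LinearMap.lsmul_apply, hk, mul_comm _ k,
        mul_smul, hs, smul_zero]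
  exact hker (hT ▸ mem_top)

theorem stmt17_general (R : Type) [CommRing R] [IsDomain R]
    (x : R) (hx : x ≠ 0)
    (E : Type) [AddCommGroup E] [Module R E] [Module.Finite R E] [NoZeroSMulDivisors R E]
    (hfree : Module.Free (Localization (Submonoid.powers x))
      (LocalizedModule (Submonoid.powers x) E)) :
    ∃ F : Submodule R E, Module.Free R F ∧ ∃ s : ℕ, ∀ m : E ⧸ F, (x ^ s) • m = 0 := by
  set S := Submonoid.powers x
  let f := LocalizedModule.mkLinearMap S E
  have hS : S ≤ R⁰ := powers_le_nonZeroDivisors_of_noZeroDivisors hx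
  have hf : Function.Injective f := (IsLocalizedModule.injective_iff_isRegular S f).mpr
    fun c ↦ IsSMulRegular.of_ne_zero (nonZeroDivisors.ne_zero (hS c.2))
  have : FaithfulSMul R (Localization S) :=
    (faithfulSMul_iff_algebraMap_injective _ _).mpr (IsLocalization.injective _ hS)
  obtain ⟨b, v, hbv⟩ :=
    (Module.Free.chooseBasis (Localization S) _).exists_basis_eq_comp_of_isLocalizedModule S f
  have hv : LinearIndependent R v := (hbv ▸ b.linearIndependent.restrict_scalars' R).of_comp f
  refine ⟨span R (Set.range v), .of_basis (.span hv), ?_⟩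
  have htop : (span R (Set.range v)).localized' (Localization S) S f = ⊤ := by
    rw [localized'_span, ← Set.range_comp, ← hbv, b.span_eq]
  obtain ⟨_, ⟨s, rfl⟩, hs⟩ := Module.Finite.exists_smul_eq_zero_of_forall
    (M := E ⧸ span R (Set.range v)) (S := S) fun m ↦ by
      obtain ⟨g, rfl⟩ := Submodule.Quotient.mk_surjective _ m
      obtain ⟨c, hc⟩ := exists_smul_mem_of_localized'_eq_top S f htop g
      exact ⟨c, c.2, (Submodule.Quotient.mk_eq_zero _).mpr hc⟩
  exact ⟨s, hs⟩

/-- Let `R` be a Noetherian domain and `E` a finitely generated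
torsion-free `R`-module such that `E[x⁻¹]` is free over `R[x⁻¹]` for a nonzero `x ∈ R`.
Then `E` contains a free submodule `F` with `xˢ (E/F) = 0` for some `s ≥ 0`. -/
theorem stmt17 (R : Type) [CommRing R] [IsDomain R] [IsNoetherianRing R]
    (x : R) (hx : x ≠ 0)
    (E : Type) [AddCommGroup E] [Module R E] [Module.Finite R E] [NoZeroSMulDivisors R E]
    (hfree : Module.Free (Localization (Submonoid.powers x))
      (LocalizedModule (Submonoid.powers x) E)) :
    ∃ F : Submodule R E, Module.Free R F ∧ ∃ s : ℕ, ∀ m : E ⧸ F, (x ^ s) • m = 0 :=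
  stmt17_general R x hx E hfree
end

section
/- Let (R, m) be a Noetherian local ring, x ∈ m a non-zerodivisor on R, and E a finitely generated R-module on which x is a non-zerodivisor with x·Ext^1_R(E, Z) = 0, where 0 → Z → F → E → 0 is exact with F free. Then there is a short exact sequence 0 → Z → Z ⊕ E → E → 0 in which the map E → E (as the composite through the pullback) is multiplication by x; consequently E/xE has first syzygy (over R) equal to Z ⊕ E up to free summands, and Ext_R^i(Z ⊕ E, N) ≅ Ext_R^{i+1}(E/xE, N) for all i > 0 and all R-modules N. -/
/-!
Splicing `0 → Z → F → E → 0` onto a projective resolution `P → Z` gives a projective resolution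
of `E` whose `Hom(-, Z)`-complex computes `Ext¹(E, Z)`; in it the augmentation `P₀ → Z` is a
cocycle, and `x` killing its class says that `x • 𝟙_Z` extends along `ι` to some `r : F → Z`. Then
`x • 𝟙 - ι ∘ r` vanishes on `Z`, so it descends along `π` to `s : E → F` with `π ∘ s = x • 𝟙`:
this is the splitting of the pullback of the presentation along `x`. The map
`Z × E → F, (z, e) ↦ ι z + s e` is injective because `x` is a non-zero-divisor on `E`, and its
cokernel is `E/xE`. Splicing once more gives `Extⁱ(Z × E, N) ≅ Extⁱ⁺¹(E/xE, N)` for `i > 0`.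
-/

open CategoryTheory IsLocalRing

open Limits

universe v u

lemma ModuleCat.smul_eq_zero_of_iso {R : Type*} [Ring R] {M N : ModuleCat R} (e : M ≅ N) {x : R}
    (hx : ∀ m : M, x • m = 0) (n : N) : x • n = 0 := by
  simpa using congrArg e.hom (hx (e.inv n))

namespace CategoryTheory

lemma ShortComplex.exists_f_eq_smul_of_smul_homology_eq_zero {R : Type*} [Ring R]
    (T : ShortComplex (ModuleCat R)) {x : R} (hx : ∀ h : T.homology, x • h = 0)
    {c : T.X₂} (hc : T.g c = 0) : ∃ b, T.f b = x • c := by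
  let e := T.moduleCatHomologyIso.toLinearEquiv
  let q : T.moduleCatLeftHomologyData.H := Submodule.Quotient.mk ⟨c, LinearMap.mem_ker.2 hc⟩
  have hq : x • q = 0 := by
    simpa only [map_zero, map_smul, e.apply_symm_apply] using congrArg e (hx (e.symm q))
  obtain ⟨b, hb⟩ := (Submodule.Quotient.mk_eq_zero _).1 hq
  exact ⟨b, congrArg Subtype.val hb⟩

variable {C : Type u} [Category.{v} C] [Abelian C]

namespace ProjectiveResolution

variable {X : C} (P : ProjectiveResolution X)

def augmentation : P.complex.X 0 ⟶ X := P.π.f 0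

instance : Epi P.augmentation := inferInstanceAs (Epi (P.π.f 0))

@[simp]
lemma d_comp_augmentation : P.complex.d 1 0 ≫ P.augmentation = 0 := P.complex_d_comp_π_f_zero

@[simp]
lemma d_comp_augmentation_comp {Y : C} (f : X ⟶ Y) :
    P.complex.d 1 0 ≫ P.augmentation ≫ f = 0 := by
  rw [← Category.assoc, d_comp_augmentation, zero_comp]

lemma exact_augmentation_comp {Y : C} (f : X ⟶ Y) [Mono f] :
    (ShortComplex.mk (P.complex.d 1 0) (P.augmentation ≫ f) (by simp)).Exact := by
  let φ : ShortComplex.mk _ _ P.d_comp_augmentation ⟶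
      ShortComplex.mk (P.complex.d 1 0) (P.augmentation ≫ f) (by simp) :=
    { τ₁ := 𝟙 _, τ₂ := 𝟙 _, τ₃ := f }
  exact (ShortComplex.exact_iff_of_epi_of_isIso_of_mono φ).1 P.exact₀

variable {S : ShortComplex C} (hS : S.ShortExact) (P : ProjectiveResolution S.X₁)

include hS in
lemma exact_augmentation_comp_f_g :
    (ShortComplex.mk (P.augmentation ≫ S.f) S.g (by simp)).Exact := by
  let φ : ShortComplex.mk (P.augmentation ≫ S.f) S.g (by simp) ⟶ S :=
    { τ₁ := P.augmentation, τ₂ := 𝟙 _, τ₃ := 𝟙 _ }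
  exact (ShortComplex.exact_iff_of_epi_of_isIso_of_mono φ).2 hS.exact

abbrev spliceComplex : ChainComplex C ℕ := P.complex.augment (P.augmentation ≫ S.f) (by simp)

include hS in
lemma spliceComplex_exactAt_succ (n : ℕ) : P.spliceComplex.ExactAt (n + 1) := by
  rw [HomologicalComplex.exactAt_iff' _ (n + 2) (n + 1) n (by simp) (by simp)]
  cases n with
  | zero =>
    have := hS.mono_f
    exact P.exact_augmentation_comp S.f
  | succ n => exact P.exact_succ n

noncomputable def splice [Projective S.X₂] : ProjectiveResolution S.X₃ where
  complex := P.spliceComplex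
  projective n := by cases n <;> dsimp [ChainComplex.augment] <;> infer_instance
  π := (ChainComplex.toSingle₀Equiv _ _).symm
    ⟨S.g, show (P.augmentation ≫ S.f) ≫ S.g = 0 by simp⟩
  quasiIso := ⟨fun n => by
    cases n with
    | zero =>
      rw [ChainComplex.quasiIsoAt₀_iff, ShortComplex.quasiIso_iff_of_zeros']
      · refine (ShortComplex.exact_and_epi_g_iff_of_iso ?_).2
          ⟨P.exact_augmentation_comp_f_g hS, hS.epi_g⟩
        exact ShortComplex.isoMk (Iso.refl _) (Iso.refl _) (Iso.refl _)
          ((Category.id_comp _).trans (Category.comp_id _).symm)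
          ((Category.id_comp _).trans ((ChainComplex.toSingle₀Equiv_symm_apply_f_zero
            (C := P.spliceComplex) (X := S.X₃) S.g _).symm.trans (Category.comp_id _).symm))
      all_goals rfl
    | succ n =>
      rw [quasiIsoAt_iff_exactAt' _ _ (ChainComplex.exactAt_succ_single_obj _ _)]
      exact P.spliceComplex_exactAt_succ hS n⟩

variable (R : Type*) [Ring R] [Linear R C]

noncomputable def spliceLinearYonedaObjSc'Iso (N : C) (n : ℕ) :
    (P.spliceComplex.linearYonedaObj R N).sc' (n + 1) (n + 2) (n + 3) ≅
      (P.complex.linearYonedaObj R N).sc' n (n + 1) (n + 2) :=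
  ShortComplex.isoMk (Iso.refl _) (Iso.refl _) (Iso.refl _)
    ((Category.id_comp _).trans (Category.comp_id _).symm)
    ((Category.id_comp _).trans (Category.comp_id _).symm)

end ProjectiveResolution

namespace ShortComplex.ShortExact

variable {S : ShortComplex C} (hS : S.ShortExact)

include hS in
lemma exists_comp_g_eq_smul_id_of_f_comp {R : Type*} [Ring R] [Linear R C] {x : R}
    {r : S.X₂ ⟶ S.X₁} (hr : S.f ≫ r = x • 𝟙 S.X₁) :
    ∃ s : S.X₃ ⟶ S.X₂, s ≫ S.g = x • 𝟙 S.X₃ := by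
  have hw : S.f ≫ (x • 𝟙 S.X₂ - r ≫ S.f) = 0 := by
    rw [Preadditive.comp_sub, reassoc_of% hr]; simp
  let s := hS.gIsCokernel.desc (CokernelCofork.ofπ _ hw)
  have hs : S.g ≫ s = x • 𝟙 S.X₂ - r ≫ S.f := hS.gIsCokernel.fac _ WalkingParallelPair.one
  have := hS.epi_g
  refine ⟨s, (cancel_epi S.g).1 ?_⟩
  rw [reassoc_of% hs]; simp

variable [Projective S.X₂] (R : Type*) [Ring R] [Linear R C] [EnoughProjectives C]

noncomputable def extSuccSuccIso (N : C) (n : ℕ) :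
    ((Ext R C (n + 2)).obj (Opposite.op S.X₃)).obj N ≅
      ((Ext R C (n + 1)).obj (Opposite.op S.X₁)).obj N :=
  let P := ProjectiveResolution.of S.X₁
  (P.splice hS).isoExt (n + 2) N ≪≫
    HomologicalComplex.homologyIsoSc' _ (n + 1) (n + 2) (n + 3) (by simp) (by simp) ≪≫
    ShortComplex.homologyMapIso (P.spliceLinearYonedaObjSc'Iso R N n) ≪≫
    (HomologicalComplex.homologyIsoSc' _ n (n + 1) (n + 2) (by simp) (by simp)).symm ≪≫
    (P.isoExt (n + 1) N).symm

variable {R}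

include hS in
lemma exists_f_comp_eq_smul_id {x : R}
    (hx : ∀ e : ((Ext R C 1).obj (Opposite.op S.X₃)).obj S.X₁, x • e = 0) :
    ∃ r : S.X₂ ⟶ S.X₁, S.f ≫ r = x • 𝟙 S.X₁ := by
  let P := ProjectiveResolution.of S.X₁
  let K := (P.splice hS).complex.linearYonedaObj R S.X₁
  have hK : ∀ h : (K.sc' 0 1 2).homology, x • h = 0 := ModuleCat.smul_eq_zero_of_iso
    ((P.splice hS).isoExt 1 S.X₁ ≪≫ K.homologyIsoSc' 0 1 2 (by simp) (by simp)) hx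
  have hc : (K.sc' 0 1 2).g P.augmentation = 0 := P.d_comp_augmentation
  obtain ⟨r, hr⟩ : ∃ r : S.X₂ ⟶ S.X₁, (P.augmentation ≫ S.f) ≫ r = x • P.augmentation :=
    (K.sc' 0 1 2).exists_f_eq_smul_of_smul_homology_eq_zero hK hc
  refine ⟨r, (cancel_epi P.augmentation).1 ?_⟩
  rw [Linear.comp_smul, Category.comp_id, ← Category.assoc]
  exact hr

end ShortComplex.ShortExact
end CategoryTheory

namespace LinearMap

variable {R Z F E : Type*} [CommRing R] [AddCommGroup Z] [Module R Z] [AddCommGroup F]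
  [Module R F] [AddCommGroup E] [Module R E] {ι : Z →ₗ[R] F} {π : F →ₗ[R] E} {σ : E →ₗ[R] F}
  {x : R}

lemma comp_coprod_eq_smul_snd (hexact : Function.Exact ι π) (hσ : π ∘ₗ σ = x • id) :
    π ∘ₗ ι.coprod σ = x • snd R Z E := by
  ext e
  · simp [hexact.apply_apply_eq_zero]
  · simpa using congr($hσ e)

lemma injective_coprod_of_comp_eq_smul (hι : Function.Injective ι) (hexact : Function.Exact ι π)
    (hσ : π ∘ₗ σ = x • id) (hxE : ∀ e : E, x • e = 0 → e = 0) :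
    Function.Injective (ι.coprod σ) := by
  refine (injective_iff_map_eq_zero _).2 fun ⟨z, e⟩ h ↦ ?_
  have he : e = 0 := hxE e <| by
    simpa [h] using congr($(comp_coprod_eq_smul_snd hexact hσ) (z, e)).symm
  subst he
  simpa using hι (by simpa using h)

lemma exact_coprod_mkQ_comp (hexact : Function.Exact ι π) (hσ : π ∘ₗ σ = x • id) :
    Function.Exact (ι.coprod σ) ((Ideal.span {x} • ⊤ : Submodule R E).mkQ ∘ₗ π) := by
  intro f
  simp only [comp_apply, Submodule.mkQ_apply, Submodule.Quotient.mk_eq_zero,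
    Submodule.ideal_span_singleton_smul, Submodule.mem_smul_pointwise_iff_exists,
    Submodule.mem_top, true_and, Set.mem_range, Prod.exists, coprod_apply]
  constructor
  · rintro ⟨e, he⟩
    obtain ⟨z, hz⟩ := (hexact (f - σ e)).1 (by rw [map_sub, ← comp_apply π σ, hσ]; simp [he])
    exact ⟨z, e, by rw [hz, sub_add_cancel]⟩
  · rintro ⟨z, e, rfl⟩
    exact ⟨e, by rw [map_add, hexact.apply_apply_eq_zero, ← comp_apply π σ, hσ]; simp⟩

end LinearMap

theorem stmt18_general (R : Type) [CommRing R]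
    (x : R)
    (Z F E : Type) [AddCommGroup Z] [Module R Z] [AddCommGroup F] [Module R F]
    [AddCommGroup E] [Module R E]
    [Module.Free R F]
    (hxE : ∀ e : E, x • e = 0 → e = 0)
    (ι : Z →ₗ[R] F) (π : F →ₗ[R] E)
    (hι : Function.Injective ι) (hπ : Function.Surjective π)
    (hexact : Function.Exact ι π)
    (hExt : ∀ e : ((Ext R (ModuleCat R) 1).obj
        (Opposite.op (ModuleCat.of R E))).obj (ModuleCat.of R Z), x • e = 0) :
    (∃ (j : Z →ₗ[R] Z × E) (q : (Z × E) →ₗ[R] E),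
      Function.Injective j ∧ Function.Surjective q ∧ Function.Exact j q ∧
      ∃ t : (Z × E) →ₗ[R] F, t.comp j = ι ∧ π.comp t = x • q) ∧
    (∀ i : ℕ, 0 < i → ∀ N : ModuleCat R,
      Nonempty
        ((((Ext R (ModuleCat R) i).obj
            (Opposite.op (ModuleCat.of R (Z × E)))).obj N)
          ≃ₗ[R]
         (((Ext R (ModuleCat R) (i + 1)).obj
            (Opposite.op (ModuleCat.of R
              (E ⧸ ((Ideal.span {x} : Ideal R) • (⊤ : Submodule R E)))))).obj N))) := by
  have hS : (ModuleCat.shortComplexOfCompEqZero ι π hexact.linearMap_comp_eq_zero).ShortExact :=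
    ModuleCat.shortComplex_shortExact _ hexact hι hπ
  obtain ⟨r, hr⟩ := hS.exists_f_comp_eq_smul_id hExt
  obtain ⟨s, hs⟩ := hS.exists_comp_g_eq_smul_id_of_f_comp hr
  have hπs : π ∘ₗ s.hom = x • LinearMap.id := congr(ModuleCat.Hom.hom $hs)
  have hexact' := LinearMap.exact_coprod_mkQ_comp hexact hπs
  refine ⟨⟨LinearMap.inl R Z E, LinearMap.snd R Z E, LinearMap.inl_injective,
    LinearMap.snd_surjective, Function.Exact.inl_snd, ι.coprod s.hom, LinearMap.coprod_inl ι _,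
    LinearMap.comp_coprod_eq_smul_snd hexact hπs⟩, fun i hi N ↦ ?_⟩
  obtain ⟨n, rfl⟩ := Nat.exists_eq_succ_of_ne_zero hi.ne'
  have hS' : (ModuleCat.shortComplexOfCompEqZero _ _ hexact'.linearMap_comp_eq_zero).ShortExact :=
    ModuleCat.shortComplex_shortExact _ hexact'
      (LinearMap.injective_coprod_of_comp_eq_smul hι hexact hπs hxE)
      ((Submodule.mkQ_surjective _).comp hπ)
  exact ⟨(hS'.extSuccSuccIso R N n).symm.toLinearEquiv⟩

/-- Let `(R, m)` be a Noetherian local ring, `x ∈ m` a non-zerodivisor on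
`R` and on a finitely generated module `E` with free presentation `0 → Z → F → E → 0`, such
that `x · Ext¹_R(E, Z) = 0`.  Then there is a short exact sequence `0 → Z → Z ⊕ E → E → 0`
fitting over the presentation with the induced self-map of `E` being multiplication by `x`,
and `Ext_R^i(Z ⊕ E, N) ≅ Ext_R^{i+1}(E/xE, N)` for all `i > 0` and all `N`. -/
theorem stmt18 (R : Type) [CommRing R] [IsNoetherianRing R] [IsLocalRing R]
    (x : R) (hxm : x ∈ maximalIdeal R) (hx : x ∈ nonZeroDivisors R)
    (Z F E : Type) [AddCommGroup Z] [Module R Z] [AddCommGroup F] [Module R F]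
    [AddCommGroup E] [Module R E]
    [Module.Free R F] [Module.Finite R F] [Module.Finite R E] [Module.Finite R Z]
    (hxE : ∀ e : E, x • e = 0 → e = 0)
    (ι : Z →ₗ[R] F) (π : F →ₗ[R] E)
    (hι : Function.Injective ι) (hπ : Function.Surjective π)
    (hexact : Function.Exact ι π)
    (hExt : ∀ e : ((Ext R (ModuleCat R) 1).obj
        (Opposite.op (ModuleCat.of R E))).obj (ModuleCat.of R Z), x • e = 0) :
    (∃ (j : Z →ₗ[R] Z × E) (q : (Z × E) →ₗ[R] E),
      Function.Injective j ∧ Function.Surjective q ∧ Function.Exact j q ∧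
      ∃ t : (Z × E) →ₗ[R] F, t.comp j = ι ∧ π.comp t = x • q) ∧
    (∀ i : ℕ, 0 < i → ∀ N : ModuleCat R,
      Nonempty
        ((((Ext R (ModuleCat R) i).obj
            (Opposite.op (ModuleCat.of R (Z × E)))).obj N)
          ≃ₗ[R]
         (((Ext R (ModuleCat R) (i + 1)).obj
            (Opposite.op (ModuleCat.of R
              (E ⧸ ((Ideal.span {x} : Ideal R) • (⊤ : Submodule R E)))))).obj N))) :=
  stmt18_general R x Z F E hxE ι π hι hπ hexact hExt
end
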